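/- arXiv:1410.1095 — 5 statements merged into one kernel-verified Lean document; each statement's English description precedes it below -/
import Mathlib

section
/- (Grad-div stabilization enforces the exact divergence-free condition, Lemma 3 in classical form.) Let k > 0 and let l, B⁻, B, E : ℝ³ → ℝ³ be smooth (C^∞) vector fields with compact support such that div l(x) = 0 and div B⁻(x) = 0 for all x. Suppose that for every smooth compactly supported test field C : ℝ³ → ℝ³ one has ∫_{ℝ³} ( l(x) − k⁻¹(B(x) − B⁻(x)) − curl E(x) ) · C(x) dx = ∫_{ℝ³} div B(x) · div C(x) dx. Then div B(x) = 0 for all x ∈ ℝ³, and moreover l − k⁻¹(B − B⁻) − curl E = 0 identically. -/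
open MeasureTheory RealInnerProductSpace

noncomputable section

/-- `ℝ³` as Euclidean space. -/
abbrev E3 := EuclideanSpace ℝ (Fin 3)

/-- Partial derivative of `F` at `x` in the `i`-th coordinate direction. -/
def pd (i : Fin 3) (F : E3 → E3) (x : E3) : E3 :=
  fderiv ℝ F x (EuclideanSpace.single i 1)

/-- Divergence of a vector field on `ℝ³`. -/
def div3 (F : E3 → E3) (x : E3) : ℝ := ∑ i, pd i F x i

/-- Curl of a vector field on `ℝ³`. -/
def curl3 (F : E3 → E3) (x : E3) : E3 :=
  (WithLp.equiv 2 (Fin 3 → ℝ)).symm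
    ![pd 1 F x 2 - pd 2 F x 1,
      pd 2 F x 0 - pd 0 F x 2,
      pd 0 F x 1 - pd 1 F x 0]

/-- Cross product on `ℝ³`. -/
def cross3 (u v : E3) : E3 :=
  (WithLp.equiv 2 (Fin 3 → ℝ)).symm
    (crossProduct ((WithLp.equiv 2 (Fin 3 → ℝ)) u) ((WithLp.equiv 2 (Fin 3 → ℝ)) v))

/-- Gradient of a scalar function on `ℝ³` (vector of partial derivatives). -/
def grad3 (p : E3 → ℝ) (x : E3) : E3 :=
  (WithLp.equiv 2 (Fin 3 → ℝ)).symm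
    ![fderiv ℝ p x (EuclideanSpace.single 0 1),
      fderiv ℝ p x (EuclideanSpace.single 1 1),
      fderiv ℝ p x (EuclideanSpace.single 2 1)]

/-- Componentwise Laplacian of a vector field on `ℝ³`. -/
def lap3 (u : E3 → E3) (x : E3) : E3 :=
  ∑ j, fderiv ℝ (fun y => fderiv ℝ u y (EuclideanSpace.single j 1)) x
        (EuclideanSpace.single j 1)

/-- Squared Frobenius norm of the Jacobian of `u` at `x`. -/
def gradNormSq (u : E3 → E3) (x : E3) : ℝ :=
  ∑ i, ∑ j, (fderiv ℝ u x (EuclideanSpace.single j 1) i) ^ 2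


namespace GradDivAux

notation "e3" i => EuclideanSpace.single i (1:ℝ)

lemma clm_comp_fderiv {F' : Type*} [NormedAddCommGroup F'] [NormedSpace ℝ F']
    {G' : Type*} [NormedAddCommGroup G'] [NormedSpace ℝ G']
    (f : E3 → F') (L : F' →L[ℝ] G') {x : E3} (hf : DifferentiableAt ℝ f x) (v : E3) :
    fderiv ℝ (fun y => L (f y)) x v = L (fderiv ℝ f x v) := by
  have h : (fun y => L (f y)) = L ∘ f := rfl
  rw [h, fderiv_comp x L.differentiableAt hf, ContinuousLinearMap.fderiv]
  rfl

lemma comp_proj (F : E3 → E3) {x : E3} (hF : DifferentiableAt ℝ F x) (j : Fin 3) (v : E3) :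
    fderiv ℝ (fun y => F y j) x v = fderiv ℝ F x v j :=
  clm_comp_fderiv F (EuclideanSpace.proj j) hF v

lemma pd_comm (g : E3 → ℝ) (hg : ContDiff ℝ (⊤ : ℕ∞) g) (x v w : E3) :
    fderiv ℝ (fun y => fderiv ℝ g y v) x w = fderiv ℝ (fun y => fderiv ℝ g y w) x v := by
  have hsym := (hg.contDiffAt (x := x)).isSymmSndFDerivAt (by rw [minSmoothness_of_isRCLikeNormedField]; exact WithTop.coe_le_coe.mpr le_top)
  have hd : DifferentiableAt ℝ (fderiv ℝ g) x :=
    ((hg.fderiv_right (m := 1) (by exact WithTop.coe_le_coe.mpr le_top)).differentiable one_ne_zero).differentiableAt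
  have h1 : ∀ u z : E3, fderiv ℝ (fun y => fderiv ℝ g y u) x z
      = fderiv ℝ (fderiv ℝ g) x z u := fun u z =>
    clm_comp_fderiv (fderiv ℝ g) (ContinuousLinearMap.apply ℝ ℝ u) hd z
  rw [h1 v w, h1 w v]
  exact hsym w v

lemma pdiff_smooth (g : E3 → ℝ) (hg : ContDiff ℝ (⊤ : ℕ∞) g) (v : E3) :
    ContDiff ℝ (⊤ : ℕ∞) (fun x => fderiv ℝ g x v) :=
  (hg.fderiv_right (by simp)).clm_apply contDiff_const

lemma curl_comp (F : E3 → E3) (hF : ContDiff ℝ (⊤ : ℕ∞) F) :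
    (∀ y, curl3 F y 0 = fderiv ℝ (fun z => F z 2) y (e3 (1:Fin 3))
        - fderiv ℝ (fun z => F z 1) y (e3 (2:Fin 3)))
    ∧ (∀ y, curl3 F y 1 = fderiv ℝ (fun z => F z 0) y (e3 (2:Fin 3))
        - fderiv ℝ (fun z => F z 2) y (e3 (0:Fin 3)))
    ∧ (∀ y, curl3 F y 2 = fderiv ℝ (fun z => F z 1) y (e3 (0:Fin 3))
        - fderiv ℝ (fun z => F z 0) y (e3 (1:Fin 3))) := by
  have hd : ∀ y, DifferentiableAt ℝ F y := fun y => (hF.differentiable (by simp)).differentiableAt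
  refine ⟨fun y => ?_, fun y => ?_, fun y => ?_⟩ <;>
    simp [curl3, pd, comp_proj F (hd y)]

lemma curl3_contDiff (F : E3 → E3) (hF : ContDiff ℝ (⊤ : ℕ∞) F) : ContDiff ℝ (⊤ : ℕ∞) (curl3 F) := by
  obtain ⟨h0, h1, h2⟩ := curl_comp F hF
  have hg : ∀ j : Fin 3, ContDiff ℝ (⊤ : ℕ∞) (fun z => F z j) := fun j => contDiff_euclidean.mp hF j
  rw [contDiff_euclidean]
  intro i
  fin_cases i
  · exact (funext h0 : (fun y => curl3 F y 0) = _) ▸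
      ((pdiff_smooth _ (hg 2) _).sub (pdiff_smooth _ (hg 1) _))
  · exact (funext h1 : (fun y => curl3 F y 1) = _) ▸
      ((pdiff_smooth _ (hg 0) _).sub (pdiff_smooth _ (hg 2) _))
  · exact (funext h2 : (fun y => curl3 F y 2) = _) ▸
      ((pdiff_smooth _ (hg 1) _).sub (pdiff_smooth _ (hg 0) _))

lemma div3_curl3 (F : E3 → E3) (hF : ContDiff ℝ (⊤ : ℕ∞) F) (x : E3) : div3 (curl3 F) x = 0 := by
  obtain ⟨h0, h1, h2⟩ := curl_comp F hF
  have hg : ∀ j : Fin 3, ContDiff ℝ (⊤ : ℕ∞) (fun z => F z j) := fun j => contDiff_euclidean.mp hF j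
  have hdc : DifferentiableAt ℝ (curl3 F) x :=
    ((curl3_contDiff F hF).differentiable (by simp)).differentiableAt
  have hD : ∀ (a b : Fin 3), DifferentiableAt ℝ (fun y => fderiv ℝ (fun z => F z b) y (e3 a)) x :=
    fun a b => ((pdiff_smooth _ (hg b) _).differentiable (by simp)).differentiableAt
  have key : ∀ i : Fin 3, pd i (curl3 F) x i
      = fderiv ℝ (fun y => curl3 F y i) x (e3 i) :=
    fun i => (comp_proj (curl3 F) hdc i _).symm
  have e0 : fderiv ℝ (fun y => curl3 F y 0) x (e3 (0:Fin 3))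
      = fderiv ℝ (fun y => fderiv ℝ (fun z => F z 2) y (e3 (1:Fin 3))) x (e3 (0:Fin 3))
      - fderiv ℝ (fun y => fderiv ℝ (fun z => F z 1) y (e3 (2:Fin 3))) x (e3 (0:Fin 3)) := by
    rw [funext h0, fderiv_fun_sub (hD 1 2) (hD 2 1)]; rfl
  have e1 : fderiv ℝ (fun y => curl3 F y 1) x (e3 (1:Fin 3))
      = fderiv ℝ (fun y => fderiv ℝ (fun z => F z 0) y (e3 (2:Fin 3))) x (e3 (1:Fin 3))
      - fderiv ℝ (fun y => fderiv ℝ (fun z => F z 2) y (e3 (0:Fin 3))) x (e3 (1:Fin 3)) := by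
    rw [funext h1, fderiv_fun_sub (hD 2 0) (hD 0 2)]; rfl
  have e2 : fderiv ℝ (fun y => curl3 F y 2) x (e3 (2:Fin 3))
      = fderiv ℝ (fun y => fderiv ℝ (fun z => F z 1) y (e3 (0:Fin 3))) x (e3 (2:Fin 3))
      - fderiv ℝ (fun y => fderiv ℝ (fun z => F z 0) y (e3 (1:Fin 3))) x (e3 (2:Fin 3)) := by
    rw [funext h2, fderiv_fun_sub (hD 0 1) (hD 1 0)]; rfl
  have c1 := pd_comm _ (hg 2) x (e3 (1:Fin 3)) (e3 (0:Fin 3))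
  have c2 := pd_comm _ (hg 1) x (e3 (2:Fin 3)) (e3 (0:Fin 3))
  have c3 := pd_comm _ (hg 0) x (e3 (2:Fin 3)) (e3 (1:Fin 3))
  simp only [div3, Fin.sum_univ_three, key, e0, e1, e2]
  rw [c1, c2, c3]
  ring

lemma curl3_support (F : E3 → E3) (hs : HasCompactSupport F) :
    HasCompactSupport (curl3 F) := by
  apply (hs.fderiv (𝕜 := ℝ)).mono'
  intro x hx
  by_contra hmem
  have h0 : fderiv ℝ F x = 0 := image_eq_zero_of_notMem_tsupport hmem
  apply hx
  ext i; fin_cases i <;> simp [curl3, pd, h0]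

lemma div3_support (F : E3 → E3) (hs : HasCompactSupport F) :
    HasCompactSupport (div3 F) := by
  apply (hs.fderiv (𝕜 := ℝ)).mono'
  intro x hx
  by_contra hmem
  have h0 : fderiv ℝ F x = 0 := image_eq_zero_of_notMem_tsupport hmem
  exact hx (by simp [div3, pd, h0])

lemma div3_sub (F G : E3 → E3) (x : E3)
    (hF : DifferentiableAt ℝ F x) (hG : DifferentiableAt ℝ G x) :
    div3 (fun y => F y - G y) x = div3 F x - div3 G x := by
  simp only [div3, pd, fderiv_fun_sub hF hG]
  simp [Finset.sum_sub_distrib]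

lemma div3_smul (c : ℝ) (F : E3 → E3) (x : E3) (hF : DifferentiableAt ℝ F x) :
    div3 (fun y => c • F y) x = c * div3 F x := by
  simp only [div3, pd, fderiv_fun_const_smul hF]
  simp [Finset.mul_sum]

lemma div3_contDiff (F : E3 → E3) (hF : ContDiff ℝ (⊤ : ℕ∞) F) : ContDiff ℝ (⊤ : ℕ∞) (div3 F) := by
  have hd : ∀ y, DifferentiableAt ℝ F y := fun y => (hF.differentiable (by simp)).differentiableAt
  have h : div3 F = fun x => ∑ i : Fin 3, fderiv ℝ (fun z => F z i) x (e3 i) := by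
    funext x
    exact Finset.sum_congr rfl fun i _ => (comp_proj F (hd x) i _).symm
  rw [h]
  exact ContDiff.sum fun i _ => pdiff_smooth _ (contDiff_euclidean.mp hF i) _

end GradDivAux

open GradDivAux

/-- Lemma 3, classical form: the grad-div stabilized weak
formulation forces the magnetic field to be exactly divergence-free, and the
residual `l − k⁻¹(B − B⁻) − curl E` to vanish identically. -/
theorem graddiv_forces_div_free
    (k : ℝ) (hk : 0 < k)
    (l Bm B E : E3 → E3)
    (hl : ContDiff ℝ (⊤ : ℕ∞) l) (hls : HasCompactSupport l)
    (hBm : ContDiff ℝ (⊤ : ℕ∞) Bm) (hBms : HasCompactSupport Bm)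
    (hB : ContDiff ℝ (⊤ : ℕ∞) B) (hBs : HasCompactSupport B)
    (hE : ContDiff ℝ (⊤ : ℕ∞) E) (hEs : HasCompactSupport E)
    (hldiv : ∀ x : E3, div3 l x = 0)
    (hBmdiv : ∀ x : E3, div3 Bm x = 0)
    (hweak : ∀ C : E3 → E3, ContDiff ℝ (⊤ : ℕ∞) C → HasCompactSupport C →
      (∫ x : E3, ⟪l x - k⁻¹ • (B x - Bm x) - curl3 E x, C x⟫) =
        ∫ x : E3, div3 B x * div3 C x) :
    (∀ x : E3, div3 B x = 0) ∧
      ∀ x : E3, l x - k⁻¹ • (B x - Bm x) - curl3 E x = 0 := by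
  have hcurlc : ContDiff ℝ (⊤ : ℕ∞) (curl3 E) := curl3_contDiff E hE
  have hcurls : HasCompactSupport (curl3 E) := curl3_support E hEs
  set R : E3 → E3 := fun x => l x - k⁻¹ • (B x - Bm x) - curl3 E x with hRdef
  have hRc : ContDiff ℝ (⊤ : ℕ∞) R :=
    (hl.sub (((hB.sub hBm).const_smul k⁻¹))).sub hcurlc
  have hmidc : ContDiff ℝ (⊤ : ℕ∞) (fun x => l x - k⁻¹ • (B x - Bm x)) :=
    hl.sub ((hB.sub hBm).const_smul k⁻¹)
  have hRs : HasCompactSupport R := by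
    have h1 : HasCompactSupport (fun x => B x - Bm x) :=
      hBs.comp₂_left hBms (by simp : (0:E3) - 0 = 0)
    have h2 : HasCompactSupport (fun x => k⁻¹ • (B x - Bm x)) :=
      h1.comp_left (g := fun v : E3 => k⁻¹ • v) (by simp)
    have h3 : HasCompactSupport (fun x => l x - k⁻¹ • (B x - Bm x)) :=
      hls.comp₂_left h2 (by simp : (0:E3) - 0 = 0)
    exact h3.comp₂_left hcurls (by simp : (0:E3) - 0 = 0)
  have hdivR : ∀ x, div3 R x = -(k⁻¹ * div3 B x) := by
    intro x
    have d1 : DifferentiableAt ℝ (fun y => l y - k⁻¹ • (B y - Bm y)) x :=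
      ((hmidc.differentiable (by simp)) x)
    have d2 : DifferentiableAt ℝ (curl3 E) x := (hcurlc.differentiable (by simp)) x
    have dB : DifferentiableAt ℝ B x := (hB.differentiable (by simp)) x
    have dBm : DifferentiableAt ℝ Bm x := (hBm.differentiable (by simp)) x
    have dl : DifferentiableAt ℝ l x := (hl.differentiable (by simp)) x
    have dBB : DifferentiableAt ℝ (fun y => B y - Bm y) x := dB.sub dBm
    rw [hRdef]
    rw [div3_sub _ _ x d1 d2, div3_sub l (fun y => k⁻¹ • (B y - Bm y)) x dl (dBB.const_smul k⁻¹),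
      div3_smul _ _ x dBB, div3_sub _ _ x dB dBm,
      hldiv x, hBmdiv x, div3_curl3 E hE x]
    ring
  have hdivBc : Continuous (div3 B) := (div3_contDiff B hB).continuous
  have hdivBs : HasCompactSupport (div3 B) := div3_support B hBs
  have hi1 : Integrable (fun x => ‖R x‖ ^ 2) := by
    apply Continuous.integrable_of_hasCompactSupport
    · exact (hRc.continuous.norm).pow 2
    · exact hRs.comp_left (g := fun v : E3 => ‖v‖ ^ 2) (by simp)
  have hi2 : Integrable (fun x => (div3 B x) ^ 2) := by
    apply Continuous.integrable_of_hasCompactSupport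
    · exact hdivBc.pow 2
    · exact hdivBs.comp_left (g := fun t : ℝ => t ^ 2) (by simp)
  have hIw := hweak R hRc hRs
  have hL : (∫ x : E3, ⟪R x, R x⟫) = ∫ x : E3, ‖R x‖ ^ 2 := by
    congr 1; funext x; exact real_inner_self_eq_norm_sq (R x)
  have hRHS : (∫ x : E3, div3 B x * div3 R x) = -(k⁻¹ * ∫ x : E3, (div3 B x) ^ 2) := by
    have hpt : ∀ x, div3 B x * div3 R x = -(k⁻¹ * (div3 B x) ^ 2) := by
      intro x; rw [hdivR x]; ring
    simp_rw [hpt]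
    rw [integral_neg, integral_const_mul]
  have hEq : (∫ x : E3, ‖R x‖ ^ 2) = -(k⁻¹ * ∫ x : E3, (div3 B x) ^ 2) := by
    rw [← hL, hIw, hRHS]
  have hφ0 : (∫ x : E3, (‖R x‖ ^ 2 + k⁻¹ * (div3 B x) ^ 2)) = 0 := by
    rw [integral_add hi1 (hi2.const_mul k⁻¹), integral_const_mul, hEq]
    ring
  have hnn : ∀ x, 0 ≤ ‖R x‖ ^ 2 + k⁻¹ * (div3 B x) ^ 2 := by
    intro x
    have := inv_pos.mpr hk
    positivity
  have hiφ : Integrable (fun x => ‖R x‖ ^ 2 + k⁻¹ * (div3 B x) ^ 2) :=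
    hi1.add (hi2.const_mul k⁻¹)
  have hcφ : Continuous (fun x => ‖R x‖ ^ 2 + k⁻¹ * (div3 B x) ^ 2) :=
    ((hRc.continuous.norm.pow 2).add ((continuous_const.mul (hdivBc.pow 2))))
  have hae := (integral_eq_zero_iff_of_nonneg hnn hiφ).mp hφ0
  have hzero : (fun x => ‖R x‖ ^ 2 + k⁻¹ * (div3 B x) ^ 2) = 0 :=
    (hcφ.ae_eq_iff_eq volume continuous_const).mp hae
  have hpt : ∀ x, ‖R x‖ ^ 2 + k⁻¹ * (div3 B x) ^ 2 = 0 := fun x => congrFun hzero x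
  have hkinv : 0 < k⁻¹ := inv_pos.mpr hk
  constructor
  · intro x
    have h := hpt x
    have h1 : (div3 B x) ^ 2 = 0 := by nlinarith [sq_nonneg ‖R x‖, sq_nonneg (div3 B x)]
    exact pow_eq_zero_iff (n := 2) (by norm_num) |>.mp h1
  · intro x
    have h := hpt x
    have h1 : ‖R x‖ ^ 2 = 0 := by nlinarith [sq_nonneg ‖R x‖, sq_nonneg (div3 B x)]
    have h2 : ‖R x‖ = 0 := by
      have := pow_eq_zero_iff (n := 2) (by norm_num) |>.mp h1
      exact this
    exact norm_eq_zero.mp h2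
end
end

section
/- (Brezzi well-posedness of the abstract mixed problem, the tool behind Theorems 6, 7, 8.) Let X and Q be real Hilbert spaces, and let a : X × X → ℝ and b : X × Q → ℝ be bilinear forms that are bounded: |a(x,y)| ≤ Cₐ‖x‖‖y‖ and |b(y,q)| ≤ C_b‖y‖‖q‖ for all x, y ∈ X, q ∈ Q. Let X₀ := { x ∈ X : b(x,q) = 0 for all q ∈ Q }. Assume: (i) there is β > 0 such that for every q ∈ Q, sup over nonzero y ∈ X of b(y,q)/‖y‖ is at least β‖q‖; (ii) there is α > 0 such that for every x ∈ X₀, sup over nonzero y ∈ X₀ of a(x,y)/‖y‖ is at least α‖x‖, and for every y ∈ X₀, sup over nonzero x ∈ X₀ of a(x,y)/‖x‖ is at least α‖y‖. Then for every pair of continuous linear functionals h : X → ℝ and g : Q → ℝ there exists a unique pair (x, p) ∈ X × Q satisfying a(x,y) + b(y,p) = h(y) for all y ∈ X and b(x,q) = g(q) for all q ∈ Q; moreover there is a constant C depending only on α, β, Cₐ, C_b such that ‖x‖ + ‖p‖ ≤ C (‖h‖_{X*} + ‖g‖_{Q*}), where ‖·‖_{X*}, ‖·‖_{Q*} are operator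 norms of the functionals. -/
/-!
Represent the forms by operators through the Riesz isomorphism. The inf-sup condition on `b`
says that the adjoint `Bᵀ : Q → X` of `B : X → Q` is bounded below. Hence `Bᵀ` has closed range,
equal to `X₀ᗮ` with `X₀ = ker B`, and `B` is onto, because `B Bᵀ` is bounded below and
self-adjoint. The two inf-sup conditions on `a` make its restriction to `X₀` an isomorphism
(a bounded-below operator whose adjoint is injective is onto). To solve the problem, pick
`x₁` with `b(x₁, ·) = g`, then `x₀ ∈ X₀` with `a(x₀, ·) = h - a(x₁, ·)` on `X₀`; the residual
`h - a(x₀ + x₁, ·)` vanishes on `X₀`, so it lies in the range of `Bᵀ` and equals `b(·, p)`.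
For the estimate, split `x` along `X₀ ⊕ X₀ᗮ`: on `X₀ᗮ` the map `B` is bounded below by `β`.
-/

open InnerProductSpace RealInnerProductSpace InnerProduct

theorem Real.iSup_div_norm_le {E : Type*} [SeminormedAddCommGroup E] {P : E → Prop}
    {f : E → ℝ} {M : ℝ} (hM : 0 ≤ M) (hf : ∀ y, P y → f y ≤ M * ‖y‖) :
    ⨆ y : {y // P y}, f y / ‖(y : E)‖ ≤ M :=
  Real.iSup_le (fun y => div_le_of_le_mul₀ (norm_nonneg _) hM (hf y y.2)) hM

namespace ContinuousLinearMap

theorem antilipschitz_of_le_norm {𝕜 E F : Type*} [NormedField 𝕜] [SeminormedAddCommGroup E]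
    [SeminormedAddCommGroup F] [NormedSpace 𝕜 E] [NormedSpace 𝕜 F] (T : E →L[𝕜] F) {c : ℝ}
    (hc : 0 < c) (hT : ∀ x, c * ‖x‖ ≤ ‖T x‖) : AntilipschitzWith c⁻¹.toNNReal T := by
  refine T.antilipschitz_of_bound fun x => ?_
  rw [Real.coe_toNNReal _ (inv_nonneg.mpr hc.le), inv_mul_eq_div, le_div_iff₀' hc]
  exact hT x

variable {E F : Type*} [NormedAddCommGroup E] [InnerProductSpace ℝ E] [CompleteSpace E]
  [NormedAddCommGroup F] [InnerProductSpace ℝ F] [CompleteSpace F]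

theorem surjective_of_le_norm_of_ker_adjoint_eq_bot (T : E →L[ℝ] F) {c : ℝ} (hc : 0 < c)
    (hT : ∀ x, c * ‖x‖ ≤ ‖T x‖) (hker : (T†).ker = ⊥) : Function.Surjective T := by
  have hclosed : IsClosed (T.range : Set F) := by
    rw [LinearMap.coe_range]
    exact (T.antilipschitz_of_le_norm hc hT).isClosed_range T.uniformContinuous
  have := hclosed.completeSpace_coe
  refine LinearMap.range_eq_top.mp ?_
  rw [← Submodule.orthogonal_eq_bot_iff, orthogonal_range, hker]

theorem le_norm_comp_adjoint (T : E →L[ℝ] F) {c : ℝ} (hc : 0 < c)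
    (hT : ∀ y, c * ‖y‖ ≤ ‖(T†) y‖) (y : F) : c ^ 2 * ‖y‖ ≤ ‖(T ∘L T†) y‖ := by
  rcases eq_or_ne y 0 with rfl | hy
  · simp
  refine le_of_mul_le_mul_right ?_ (norm_pos_iff.mpr hy)
  calc c ^ 2 * ‖y‖ * ‖y‖ = (c * ‖y‖) ^ 2 := by ring
    _ ≤ ‖(T†) y‖ ^ 2 := pow_le_pow_left₀ (by positivity) (hT y) 2
    _ = ⟪(T ∘L T†) y, y⟫ := by
      rw [comp_apply, ← adjoint_inner_right, real_inner_self_eq_norm_sq]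
    _ ≤ ‖(T ∘L T†) y‖ * ‖y‖ := real_inner_le_norm _ _

theorem surjective_of_le_norm_adjoint (T : E →L[ℝ] F) {c : ℝ} (hc : 0 < c)
    (hT : ∀ y, c * ‖y‖ ≤ ‖(T†) y‖) : Function.Surjective T := by
  have hker : (T ∘L T†).ker = ⊥ := by
    rw [ker_self_comp_adjoint, LinearMap.ker_eq_bot]
    exact (T†.antilipschitz_of_le_norm hc hT).injective
  refine .of_comp (g := T†) ?_
  refine (T ∘L T†).surjective_of_le_norm_of_ker_adjoint_eq_bot (pow_pos hc 2)
    (T.le_norm_comp_adjoint hc hT) ?_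
  rwa [adjoint_comp, adjoint_adjoint]

theorem range_adjoint_eq_orthogonal_ker (T : E →L[ℝ] F) {c : ℝ} (hc : 0 < c)
    (hT : ∀ y, c * ‖y‖ ≤ ‖(T†) y‖) : (T†).range = T.kerᗮ := by
  rw [orthogonal_ker, IsClosed.submodule_topologicalClosure_eq]
  exact (T†.antilipschitz_of_le_norm hc hT).isClosed_range (T†).uniformContinuous

noncomputable def rieszOfBilin (Φ : E →L[ℝ] F →L[ℝ] ℝ) : E →L[ℝ] F :=
  (toDual ℝ F).symm.toContinuousLinearEquiv.toContinuousLinearMap ∘L Φ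

variable (Φ : E →L[ℝ] F →L[ℝ] ℝ)

omit [CompleteSpace E] in
@[simp]
theorem toDual_rieszOfBilin (x : E) : toDual ℝ F (rieszOfBilin Φ x) = Φ x :=
  (toDual ℝ F).apply_symm_apply (Φ x)

omit [CompleteSpace E] in
theorem inner_rieszOfBilin (x : E) (y : F) : ⟪rieszOfBilin Φ x, y⟫ = Φ x y := by
  rw [← toDual_apply_apply, toDual_rieszOfBilin]

omit [CompleteSpace E] in
@[simp]
theorem norm_rieszOfBilin (x : E) : ‖rieszOfBilin Φ x‖ = ‖Φ x‖ := by
  rw [← toDual_rieszOfBilin, LinearIsometryEquiv.norm_map]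

theorem adjoint_rieszOfBilin : (rieszOfBilin Φ)† = rieszOfBilin Φ.flip := by
  refine ((eq_adjoint_iff _ _).mpr fun y x => ?_).symm
  rw [inner_rieszOfBilin, real_inner_comm, inner_rieszOfBilin, flip_apply]

omit [CompleteSpace E] in
theorem ker_rieszOfBilin : (rieszOfBilin Φ).ker = Φ.ker := by
  ext x
  rw [LinearMap.mem_ker, LinearMap.mem_ker, coe_coe, coe_coe, ← toDual_rieszOfBilin,
    LinearIsometryEquiv.map_eq_zero_iff]

variable {Φ} {c : ℝ} (hc : 0 < c)
include hc

theorem surjective_of_le_norm_flip (hΦ : ∀ y, c * ‖y‖ ≤ ‖Φ.flip y‖) :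
    Function.Surjective Φ := by
  intro f
  obtain ⟨x, hx⟩ := (rieszOfBilin Φ).surjective_of_le_norm_adjoint hc
    (by simpa only [adjoint_rieszOfBilin, norm_rieszOfBilin] using hΦ) ((toDual ℝ F).symm f)
  exact ⟨x, by rw [← toDual_rieszOfBilin, hx, LinearIsometryEquiv.apply_symm_apply]⟩

theorem surjective_of_le_norm_of_injective_flip (hΦ : ∀ x, c * ‖x‖ ≤ ‖Φ x‖)
    (hinj : Function.Injective Φ.flip) : Function.Surjective Φ := by
  intro f
  have hker : (rieszOfBilin Φ)†.ker = ⊥ := by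
    rw [adjoint_rieszOfBilin, ker_rieszOfBilin, LinearMap.ker_eq_bot]
    exact hinj
  obtain ⟨x, hx⟩ := (rieszOfBilin Φ).surjective_of_le_norm_of_ker_adjoint_eq_bot hc
    (by simpa only [norm_rieszOfBilin] using hΦ) hker ((toDual ℝ F).symm f)
  exact ⟨x, by rw [← toDual_rieszOfBilin, hx, LinearIsometryEquiv.apply_symm_apply]⟩

theorem exists_flip_eq_of_ker_le (hΦ : ∀ y, c * ‖y‖ ≤ ‖Φ.flip y‖) (f : StrongDual ℝ E)
    (hf : ∀ x ∈ Φ.ker, f x = 0) : ∃ y, Φ.flip y = f := by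
  have hT : ∀ y, c * ‖y‖ ≤ ‖((rieszOfBilin Φ)†) y‖ := by
    simpa only [adjoint_rieszOfBilin, norm_rieszOfBilin] using hΦ
  have hmem : (toDual ℝ E).symm f ∈ (rieszOfBilin Φ).kerᗮ := by
    rw [ker_rieszOfBilin, Submodule.mem_orthogonal']
    intro x hx
    rw [toDual_symm_apply, hf x hx]
  rw [← range_adjoint_eq_orthogonal_ker _ hc hT, adjoint_rieszOfBilin] at hmem
  obtain ⟨y, hy : rieszOfBilin Φ.flip y = (toDual ℝ E).symm f⟩ := hmem
  exact ⟨y, by rw [← toDual_rieszOfBilin, hy, LinearIsometryEquiv.apply_symm_apply]⟩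

theorem le_norm_of_mem_orthogonal_ker (hΦ : ∀ y, c * ‖y‖ ≤ ‖Φ.flip y‖) {x : E}
    (hx : x ∈ Φ.kerᗮ) : c * ‖x‖ ≤ ‖Φ x‖ := by
  obtain ⟨y, hy⟩ := exists_flip_eq_of_ker_le hc hΦ (toDual ℝ E x) fun z hz => by
    rw [toDual_apply_apply]; exact Submodule.inner_left_of_mem_orthogonal hz hx
  have hxy : ‖x‖ ^ 2 = Φ x y := by
    rw [← real_inner_self_eq_norm_sq, ← toDual_apply_apply, ← hy, flip_apply]
  have hy_le : c * ‖y‖ ≤ ‖x‖ := by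
    simpa only [hy, LinearIsometryEquiv.norm_map] using hΦ y
  rcases eq_or_ne x 0 with rfl | hx0
  · simp
  refine le_of_mul_le_mul_right ?_ (norm_pos_iff.mpr hx0)
  calc c * ‖x‖ * ‖x‖ = c * Φ x y := by rw [mul_assoc, ← sq, hxy]
    _ ≤ c * (‖Φ x‖ * ‖y‖) := by
      gcongr; exact (le_abs_self _).trans ((Φ x).le_opNorm y)
    _ = ‖Φ x‖ * (c * ‖y‖) := by ring
    _ ≤ ‖Φ x‖ * ‖x‖ := by gcongr

end ContinuousLinearMap

open ContinuousLinearMap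

section Mixed

variable {X Q : Type*} [NormedAddCommGroup X] [InnerProductSpace ℝ X]
  [NormedAddCommGroup Q] [InnerProductSpace ℝ Q]
  (A : X →L[ℝ] X →L[ℝ] ℝ) (B : X →L[ℝ] Q →L[ℝ] ℝ)

def IsMixedSolution (h : StrongDual ℝ X) (g : StrongDual ℝ Q) (x : X) (p : Q) : Prop :=
  A x + B.flip p = h ∧ B x = g

-- `K + (1 + M K) / β` with `K = 1/α + (M/α + 1)/β`: the bound `‖x‖ ≤ K (‖h‖ + ‖g‖)` fed into
-- `β ‖p‖ ≤ ‖h‖ + M ‖x‖`.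
noncomputable def brezziConstant (α β M : ℝ) : ℝ :=
  (1 + M / β) * (1 / α + (M / α + 1) / β) + 1 / β

theorem brezziConstant_pos {α β M : ℝ} (hα : 0 < α) (hβ : 0 < β) (hM : 0 ≤ M) :
    0 < brezziConstant α β M := by
  unfold brezziConstant
  positivity

variable {A B} {α β : ℝ} {h : StrongDual ℝ X} {g : StrongDual ℝ Q} {x : X} {p : Q}

theorem IsMixedSolution.sub {h' : StrongDual ℝ X} {g' : StrongDual ℝ Q} {x' : X} {p' : Q}
    (hs : IsMixedSolution A B h g x p) (hs' : IsMixedSolution A B h' g' x' p') :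
    IsMixedSolution A B (h - h') (g - g') (x - x') (p - p') := by
  refine ⟨?_, by rw [map_sub, hs.2, hs'.2]⟩
  rw [map_sub, map_sub, ← hs.1, ← hs'.1]
  abel

theorem IsMixedSolution.norm_snd_le (hβ : 0 < β) (hB : ∀ q, β * ‖q‖ ≤ ‖B.flip q‖)
    (hs : IsMixedSolution A B h g x p) : ‖p‖ ≤ (‖h‖ + ‖A‖ * ‖x‖) / β := by
  rw [le_div_iff₀' hβ]
  calc β * ‖p‖ ≤ ‖B.flip p‖ := hB p
    _ = ‖h - A x‖ := by rw [← hs.1, add_sub_cancel_left]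
    _ ≤ ‖h‖ + ‖A‖ * ‖x‖ := (norm_sub_le _ _).trans (by gcongr; exact A.le_opNorm x)

variable [CompleteSpace X] [CompleteSpace Q]

theorem IsMixedSolution.norm_fst_le (hα : 0 < α) (hβ : 0 < β)
    (hB : ∀ q, β * ‖q‖ ≤ ‖B.flip q‖)
    (hA : ∀ x : B.ker, α * ‖x‖ ≤ ‖A x ∘L B.ker.subtypeL‖)
    (hs : IsMixedSolution A B h g x p) : ‖x‖ ≤ ‖h‖ / α + (‖A‖ / α + 1) / β * ‖g‖ := by
  obtain ⟨x₀, hx₀, x₁, hx₁, rfl⟩ := B.ker.exists_add_mem_mem_orthogonal x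
  have hBx₀ : B x₀ = 0 := hx₀
  have hx₁_le : ‖x₁‖ ≤ ‖g‖ / β := by
    rw [le_div_iff₀' hβ, ← hs.2, map_add, hBx₀, zero_add]
    exact le_norm_of_mem_orthogonal_ker hβ hB hx₁
  have hx₀_le : ‖x₀‖ ≤ (‖h‖ + ‖A‖ * ‖x₁‖) / α := by
    have hrestrict : A x₀ ∘L B.ker.subtypeL = (h - A x₁) ∘L B.ker.subtypeL := by
      ext ⟨y, hy⟩
      have hBy : B.flip p y = 0 := by
        rw [flip_apply, show B y = 0 from hy, zero_apply]
      have := congrArg (· y) hs.1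
      simp only [add_apply, map_add, hBy, add_zero] at this
      simp only [comp_apply, Submodule.subtypeL_apply, sub_apply, ← this]
      ring
    rw [le_div_iff₀' hα]
    calc α * ‖x₀‖ = α * ‖(⟨x₀, hx₀⟩ : B.ker)‖ := rfl
      _ ≤ ‖(h - A x₁) ∘L B.ker.subtypeL‖ := hrestrict ▸ hA ⟨x₀, hx₀⟩
      _ ≤ ‖h - A x₁‖ := opNorm_le_bound _ (norm_nonneg _) fun y => (h - A x₁).le_opNorm y
      _ ≤ ‖h‖ + ‖A‖ * ‖x₁‖ := (norm_sub_le _ _).trans (by gcongr; exact A.le_opNorm x₁)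
  calc ‖x₀ + x₁‖ ≤ ‖x₀‖ + ‖x₁‖ := norm_add_le _ _
    _ ≤ (‖h‖ + ‖A‖ * (‖g‖ / β)) / α + ‖g‖ / β :=
      add_le_add (hx₀_le.trans (by gcongr)) hx₁_le
    _ = ‖h‖ / α + (‖A‖ / α + 1) / β * ‖g‖ := by ring

theorem IsMixedSolution.norm_add_norm_le (hα : 0 < α) (hβ : 0 < β)
    (hB : ∀ q, β * ‖q‖ ≤ ‖B.flip q‖)
    (hA : ∀ x : B.ker, α * ‖x‖ ≤ ‖A x ∘L B.ker.subtypeL‖)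
    (hs : IsMixedSolution A B h g x p) :
    ‖x‖ + ‖p‖ ≤ brezziConstant α β ‖A‖ * (‖h‖ + ‖g‖) := by
  set K := 1 / α + (‖A‖ / α + 1) / β
  have hx : ‖x‖ ≤ K * (‖h‖ + ‖g‖) := by
    refine (hs.norm_fst_le hα hβ hB hA).trans ?_
    have hK : K * (‖h‖ + ‖g‖) = ‖h‖ / α + (‖A‖ / α + 1) / β * ‖g‖
        + (‖h‖ * ((‖A‖ / α + 1) / β) + ‖g‖ / α) := by ring
    have : 0 ≤ ‖h‖ * ((‖A‖ / α + 1) / β) + ‖g‖ / α := by positivity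
    linarith
  have hp : ‖p‖ ≤ (‖h‖ + ‖g‖ + ‖A‖ * (K * (‖h‖ + ‖g‖))) / β := by
    refine (hs.norm_snd_le hβ hB).trans ?_
    gcongr
    · exact le_add_of_nonneg_right (norm_nonneg g)
  calc ‖x‖ + ‖p‖ ≤ K * (‖h‖ + ‖g‖) + (‖h‖ + ‖g‖ + ‖A‖ * (K * (‖h‖ + ‖g‖))) / β :=
        add_le_add hx hp
    _ = brezziConstant α β ‖A‖ * (‖h‖ + ‖g‖) := by
      rw [brezziConstant]
      ring

theorem IsMixedSolution.unique (hα : 0 < α) (hβ : 0 < β)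
    (hB : ∀ q, β * ‖q‖ ≤ ‖B.flip q‖)
    (hA : ∀ x : B.ker, α * ‖x‖ ≤ ‖A x ∘L B.ker.subtypeL‖)
    {x' : X} {p' : Q} (hs : IsMixedSolution A B h g x p)
    (hs' : IsMixedSolution A B h g x' p') : x = x' ∧ p = p' := by
  have := (hs.sub hs').norm_add_norm_le hα hβ hB hA
  rw [sub_self, sub_self, norm_zero, norm_zero, add_zero, mul_zero] at this
  constructor
  · rw [← sub_eq_zero, ← norm_le_zero_iff]
    linarith [norm_nonneg (p - p')]
  · rw [← sub_eq_zero, ← norm_le_zero_iff]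
    linarith [norm_nonneg (x - x')]

theorem exists_isMixedSolution (hα : 0 < α) (hβ : 0 < β)
    (hB : ∀ q, β * ‖q‖ ≤ ‖B.flip q‖)
    (hA₁ : ∀ x : B.ker, α * ‖x‖ ≤ ‖A x ∘L B.ker.subtypeL‖)
    (hA₂ : ∀ y : B.ker, α * ‖y‖ ≤ ‖A.flip y ∘L B.ker.subtypeL‖)
    (h : StrongDual ℝ X) (g : StrongDual ℝ Q) : ∃ x p, IsMixedSolution A B h g x p := by
  obtain ⟨x₁, hx₁⟩ := surjective_of_le_norm_flip hβ hB g
  let A₀ := A.bilinearComp B.ker.subtypeL B.ker.subtypeL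
  have hA₀ : ∀ x, α * ‖x‖ ≤ ‖A₀ x‖ := fun x => (hA₁ x).trans_eq (by congr 1)
  have hA₀_flip : ∀ y, α * ‖y‖ ≤ ‖A₀.flip y‖ := fun y => (hA₂ y).trans_eq (by congr 1)
  have hA₀_inj : Function.Injective A₀.flip :=
    (A₀.flip.antilipschitz_of_le_norm hα hA₀_flip).injective
  obtain ⟨x₀, hx₀⟩ := surjective_of_le_norm_of_injective_flip hα hA₀ hA₀_inj
    ((h - A x₁) ∘L B.ker.subtypeL)
  have hvanish : ∀ y ∈ B.ker, (h - A (x₀ + x₁)) y = 0 := by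
    intro y hy
    have := congrArg (· ⟨y, hy⟩) hx₀
    simp only [A₀, bilinearComp_apply, comp_apply, Submodule.subtypeL_apply, sub_apply] at this
    simp only [sub_apply, map_add, add_apply, this]
    ring
  obtain ⟨p, hp⟩ := exists_flip_eq_of_ker_le hβ hB _ hvanish
  refine ⟨x₀ + x₁, p, by rw [hp, add_sub_cancel], ?_⟩
  rw [map_add, show B x₀ = 0 from x₀.2, zero_add, hx₁]

end Mixed

/-- Brezzi's theorem: well-posedness of the abstract mixed
variational problem under boundedness and inf-sup conditions. -/
theorem brezzi_wellposedness
    {X Q : Type*}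
    [NormedAddCommGroup X] [InnerProductSpace ℝ X] [CompleteSpace X]
    [NormedAddCommGroup Q] [InnerProductSpace ℝ Q] [CompleteSpace Q]
    (a : X →ₗ[ℝ] X →ₗ[ℝ] ℝ) (b : X →ₗ[ℝ] Q →ₗ[ℝ] ℝ)
    (Ca Cb : ℝ)
    (hCa : ∀ x y : X, |a x y| ≤ Ca * ‖x‖ * ‖y‖)
    (hCb : ∀ (y : X) (q : Q), |b y q| ≤ Cb * ‖y‖ * ‖q‖)
    (β : ℝ) (hβ : 0 < β)
    (hb : ∀ q : Q, β * ‖q‖ ≤ ⨆ y : {y : X // y ≠ 0}, b (y : X) q / ‖(y : X)‖)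
    (α : ℝ) (hα : 0 < α)
    (ha₁ : ∀ x : X, (∀ q : Q, b x q = 0) →
      α * ‖x‖ ≤ ⨆ y : {y : X // (∀ q : Q, b y q = 0) ∧ y ≠ 0},
        a x (y : X) / ‖(y : X)‖)
    (ha₂ : ∀ y : X, (∀ q : Q, b y q = 0) →
      α * ‖y‖ ≤ ⨆ x : {x : X // (∀ q : Q, b x q = 0) ∧ x ≠ 0},
        a (x : X) y / ‖(x : X)‖) :
    ∃ C : ℝ, 0 < C ∧
      ∀ (h : X →L[ℝ] ℝ) (g : Q →L[ℝ] ℝ),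
        (∃! xp : X × Q,
          (∀ y : X, a xp.1 y + b y xp.2 = h y) ∧ ∀ q : Q, b xp.1 q = g q) ∧
        ∀ xp : X × Q,
          ((∀ y : X, a xp.1 y + b y xp.2 = h y) ∧ ∀ q : Q, b xp.1 q = g q) →
            ‖xp.1‖ + ‖xp.2‖ ≤ C * (‖h‖ + ‖g‖) := by
  let A := a.mkContinuous₂ Ca hCa
  let B := b.mkContinuous₂ Cb hCb
  have hker (x : X) : x ∈ B.ker ↔ ∀ q, b x q = 0 := by
    simp [B, LinearMap.mem_ker, ContinuousLinearMap.ext_iff]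
  have hB (q : Q) : β * ‖q‖ ≤ ‖B.flip q‖ :=
    (hb q).trans <| Real.iSup_div_norm_le (norm_nonneg _) fun y _ =>
      (le_abs_self _).trans ((B.flip q).le_opNorm y)
  have hA₁ (x : B.ker) : α * ‖x‖ ≤ ‖A x ∘L B.ker.subtypeL‖ :=
    (ha₁ x ((hker x).mp x.2)).trans <| Real.iSup_div_norm_le (by positivity) fun y hy =>
      (le_abs_self _).trans ((A x ∘L B.ker.subtypeL).le_opNorm ⟨y, (hker y).mpr hy.1⟩)
  have hA₂ (y : B.ker) : α * ‖y‖ ≤ ‖A.flip y ∘L B.ker.subtypeL‖ :=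
    (ha₂ y ((hker y).mp y.2)).trans <| Real.iSup_div_norm_le (f := (a · y)) (by positivity) fun x hx =>
      (le_abs_self _).trans ((A.flip y ∘L B.ker.subtypeL).le_opNorm ⟨x, (hker x).mpr hx.1⟩)
  have hsol (h : StrongDual ℝ X) (g : StrongDual ℝ Q) (xp : X × Q) :
      ((∀ y, a xp.1 y + b y xp.2 = h y) ∧ ∀ q, b xp.1 q = g q) ↔
        IsMixedSolution A B h g xp.1 xp.2 := by
    simp [IsMixedSolution, A, B, ContinuousLinearMap.ext_iff]
  refine ⟨brezziConstant α β ‖A‖, brezziConstant_pos hα hβ (norm_nonneg A), fun h g => ?_⟩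
  simp only [hsol]
  obtain ⟨x, p, hs⟩ := exists_isMixedSolution hα hβ hB hA₁ hA₂ h g
  exact ⟨⟨(x, p), hs, fun xp hxp => Prod.ext_iff.mpr (hxp.unique hα hβ hB hA₁ hs)⟩,
    fun xp hxp => hxp.norm_add_norm_le hα hβ hB hA₁⟩
end

section
/- (Key coercivity inequality in the proof of Lemma 6.) Let (Ω, μ) be a measure space, let S > 0, M ≥ 0, and let k > 0 satisfy 8·S·M²·k ≤ 1. Let u, E, B⁻ : Ω → ℝ³ be strongly measurable with ∫_Ω ‖u(x)‖² dμ < ∞, ∫_Ω ‖E(x)‖² dμ < ∞, and ‖B⁻(x)‖ ≤ M for μ-almost every x. Then k⁻¹ ∫_Ω ‖u(x)‖² dμ + S ∫_Ω ‖E(x) + u(x) × B⁻(x)‖² dμ ≥ min(1/2, S/2) · ( k⁻¹ ∫_Ω ‖u(x)‖² dμ + ∫_Ω ‖E(x)‖² dμ ). -/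
open MeasureTheory RealInnerProductSpace

noncomputable section

/-! Pointwise `‖E + w‖² ≥ ‖E‖² / 2 - ‖w‖²`, and `‖u × B⁻‖ ≤ M ‖u‖` by Lagrange's identity.
Integrating, `S ∫ ‖E + u × B⁻‖² ≥ (S / 2) ∫ ‖E‖² - S M² ∫ ‖u‖²`, and the smallness condition
`8 S M² k ≤ 1` makes the loss `S M² ∫ ‖u‖²` at most `k⁻¹ ∫ ‖u‖² / 8`, which the term
`k⁻¹ ∫ ‖u‖²` absorbs. -/

namespace EuclideanSpace

variable {ι : Type*} [Fintype ι]

lemma real_norm_sq_eq_dotProduct (x : EuclideanSpace ℝ ι) : ‖x‖ ^ 2 = x.ofLp ⬝ᵥ x.ofLp := by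
  rw [← real_inner_self_eq_norm_sq, EuclideanSpace.inner_eq_star_dotProduct, star_trivial]

lemma real_inner_eq_dotProduct (x y : EuclideanSpace ℝ ι) : ⟪x, y⟫ = x.ofLp ⬝ᵥ y.ofLp := by
  rw [EuclideanSpace.inner_eq_star_dotProduct, star_trivial, dotProduct_comm]

end EuclideanSpace

lemma norm_cross3_sq (u v : E3) : ‖cross3 u v‖ ^ 2 = ‖u‖ ^ 2 * ‖v‖ ^ 2 - ⟪u, v⟫ ^ 2 := by
  simp only [EuclideanSpace.real_norm_sq_eq_dotProduct, EuclideanSpace.real_inner_eq_dotProduct,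
    cross3, WithLp.equiv_apply, WithLp.equiv_symm_apply, cross_dot_cross,
    dotProduct_comm v.ofLp u.ofLp]
  ring

lemma norm_cross3_le (u v : E3) : ‖cross3 u v‖ ≤ ‖u‖ * ‖v‖ := by
  refine (pow_le_pow_iff_left₀ (norm_nonneg _) (by positivity) two_ne_zero).1 ?_
  rw [norm_cross3_sq, mul_pow]
  linarith [sq_nonneg ⟪u, v⟫]

lemma continuous_cross3 : Continuous (Function.uncurry cross3) := by
  simp only [Function.uncurry_def, cross3, WithLp.equiv_apply, WithLp.equiv_symm_apply,
    cross_apply]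
  fun_prop

section

variable {F : Type*} [SeminormedAddCommGroup F]

lemma norm_sq_div_two_sub_norm_sq_le (a b : F) : ‖a‖ ^ 2 / 2 - ‖b‖ ^ 2 ≤ ‖a + b‖ ^ 2 := by
  have h : ‖a‖ ≤ ‖a + b‖ + ‖b‖ := by simpa using norm_sub_le (a + b) b
  nlinarith [add_sq_le (a := ‖a + b‖) (b := ‖b‖), pow_le_pow_left₀ (norm_nonneg a) h 2]

end

section

variable {Ω F G : Type*} [MeasurableSpace Ω] {μ : Measure Ω} [NormedAddCommGroup F]
  [NormedAddCommGroup G]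

lemma integral_norm_sq_div_two_sub_le {f g : Ω → F} (hf : MemLp f 2 μ) (hg : MemLp g 2 μ) :
    (∫ x, ‖f x‖ ^ 2 ∂μ) / 2 - ∫ x, ‖g x‖ ^ 2 ∂μ ≤ ∫ x, ‖f x + g x‖ ^ 2 ∂μ := by
  have hf2 := hf.norm.integrable_sq
  rw [← integral_div, ← integral_sub (hf2.div_const 2) hg.norm.integrable_sq]
  exact integral_mono ((hf2.div_const 2).sub hg.norm.integrable_sq)
    (hf.add hg).norm.integrable_sq fun x => norm_sq_div_two_sub_norm_sq_le (f x) (g x)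

lemma integral_norm_sq_le_of_ae_norm_le_mul {f : Ω → F} {g : Ω → G} {c : ℝ}
    (hg : Integrable (fun x => ‖g x‖ ^ 2) μ) (hfg : ∀ᵐ x ∂μ, ‖f x‖ ≤ c * ‖g x‖) :
    ∫ x, ‖f x‖ ^ 2 ∂μ ≤ c ^ 2 * ∫ x, ‖g x‖ ^ 2 ∂μ := by
  rw [← integral_const_mul]
  refine integral_mono_of_nonneg (ae_of_all _ fun x => by positivity) (hg.const_mul _) ?_
  filter_upwards [hfg] with x hx
  rw [← mul_pow]
  exact pow_le_pow_left₀ (norm_nonneg _) hx 2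

end

theorem picard_coercivity_general
    {Ω : Type*} [MeasurableSpace Ω] (μ : Measure Ω)
    (S M k : ℝ) (hS : 0 < S) (hk : 0 < k)
    (hkM : 8 * S * M ^ 2 * k ≤ 1)
    (u E Bm : Ω → E3)
    (hu : AEStronglyMeasurable u μ) (hE : AEStronglyMeasurable E μ)
    (hBm : AEStronglyMeasurable Bm μ)
    (hu2 : Integrable (fun x => ‖u x‖ ^ 2) μ)
    (hE2 : Integrable (fun x => ‖E x‖ ^ 2) μ)
    (hBbound : ∀ᵐ x ∂μ, ‖Bm x‖ ≤ M) :
    min (1 / 2) (S / 2) *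
        (k⁻¹ * (∫ x, ‖u x‖ ^ 2 ∂μ) + ∫ x, ‖E x‖ ^ 2 ∂μ) ≤
      k⁻¹ * (∫ x, ‖u x‖ ^ 2 ∂μ) +
        S * ∫ x, ‖E x + cross3 (u x) (Bm x)‖ ^ 2 ∂μ := by
  have hcross : ∀ᵐ x ∂μ, ‖cross3 (u x) (Bm x)‖ ≤ M * ‖u x‖ := by
    filter_upwards [hBbound] with x hx
    calc ‖cross3 (u x) (Bm x)‖ ≤ ‖u x‖ * ‖Bm x‖ := norm_cross3_le _ _
      _ ≤ M * ‖u x‖ := by rw [mul_comm]; exact mul_le_mul_of_nonneg_right hx (norm_nonneg _)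
  have huL2 : MemLp u 2 μ := (memLp_two_iff_integrable_sq_norm hu).2 hu2
  have hcrossL2 : MemLp (fun x => cross3 (u x) (Bm x)) 2 μ :=
    huL2.of_le_mul (continuous_cross3.comp_aestronglyMeasurable₂ hu hBm) hcross
  have hlower := integral_norm_sq_div_two_sub_le
    ((memLp_two_iff_integrable_sq_norm hE).2 hE2) hcrossL2
  have hcrossSq := integral_norm_sq_le_of_ae_norm_le_mul hu2 hcross
  set U := ∫ x, ‖u x‖ ^ 2 ∂μ
  set V := ∫ x, ‖E x‖ ^ 2 ∂μ
  have hU : 0 ≤ U := integral_nonneg fun x => by positivity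
  have hkU : 0 ≤ k⁻¹ * U := by positivity
  have hSM : S * M ^ 2 ≤ k⁻¹ / 8 := by
    rw [inv_eq_one_div, div_div, le_div_iff₀ (by positivity)]
    linarith
  have hSMU : S * M ^ 2 * U ≤ k⁻¹ / 8 * U := mul_le_mul_of_nonneg_right hSM hU
  calc min (1 / 2) (S / 2) * (k⁻¹ * U + V)
      ≤ 1 / 2 * (k⁻¹ * U) + S / 2 * V := by
        rw [mul_add]
        gcongr
        exacts [min_le_left _ _, min_le_right _ _]
    _ ≤ k⁻¹ * U + S * (V / 2 - M ^ 2 * U) := by linarith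
    _ ≤ k⁻¹ * U + S * ∫ x, ‖E x + cross3 (u x) (Bm x)‖ ^ 2 ∂μ := by gcongr; linarith

/-- key coercivity inequality in the proof of Lemma 6:
for `8·S·M²·k ≤ 1`,
`k⁻¹∫‖u‖² + S∫‖E + u × B⁻‖² ≥ min(1/2, S/2)·(k⁻¹∫‖u‖² + ∫‖E‖²)`. -/
theorem picard_coercivity
    {Ω : Type*} [MeasurableSpace Ω] (μ : Measure Ω)
    (S M k : ℝ) (hS : 0 < S) (hM : 0 ≤ M) (hk : 0 < k)
    (hkM : 8 * S * M ^ 2 * k ≤ 1)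
    (u E Bm : Ω → E3)
    (hu : AEStronglyMeasurable u μ) (hE : AEStronglyMeasurable E μ)
    (hBm : AEStronglyMeasurable Bm μ)
    (hu2 : Integrable (fun x => ‖u x‖ ^ 2) μ)
    (hE2 : Integrable (fun x => ‖E x‖ ^ 2) μ)
    (hBbound : ∀ᵐ x ∂μ, ‖Bm x‖ ≤ M) :
    min (1 / 2) (S / 2) *
        (k⁻¹ * (∫ x, ‖u x‖ ^ 2 ∂μ) + ∫ x, ‖E x‖ ^ 2 ∂μ) ≤
      k⁻¹ * (∫ x, ‖u x‖ ^ 2 ∂μ) +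
        S * ∫ x, ‖E x + cross3 (u x) (Bm x)‖ ^ 2 ∂μ :=
  picard_coercivity_general μ S M k hS hk hkM u E Bm hu hE hBm hu2 hE2 hBbound
end
end

section
/- (Energy identity for classical solutions of the MHD system, Theorem 2.) Let Re, Rm, S > 0. Let u, B, E, j, f : ℝ × ℝ³ → ℝ³ and p : ℝ × ℝ³ → ℝ be smooth (C^∞ jointly in (t,x)), and suppose there is a compact set K ⊂ ℝ³ such that for every t the functions u(t,·), B(t,·), E(t,·), j(t,·), p(t,·), f(t,·) vanish outside K. Assume that for all (t,x) the following hold pointwise: (momentum) ∂u/∂t + (u·∇)u − (1/Re)Δu − S (j × B) + ∇p = f; (Ampère) j = (1/Rm) curl B; (Faraday) ∂B/∂t + curl E = 0; (incompressibility) div u = 0; (Ohm) j = E + u × B, where spatial differential operators act on the x variable. Then for every t ∈ ℝ, the functions s ↦ ∫_{ℝ³} ‖u(s,x)‖² dx and s ↦ ∫_{ℝ³} ‖B(s,x)‖² dx are differentiable at t and ½ d/dt ∫_{ℝ³} ‖u(t,x)‖² dx + (S/(2·Rm)) d/dt ∫_{ℝ³} ‖B(t,x)‖² dx + (1/Re)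 ∫_{ℝ³} ‖∇u(t,x)‖² dx + S ∫_{ℝ³} ‖j(t,x)‖² dx = ∫_{ℝ³} f(t,x) · u(t,x) dx. -/
open MeasureTheory RealInnerProductSpace

noncomputable section

section MHDAux
open Metric
open scoped ContDiff
variable {K : Set E3}

lemma integrable_supp (hK : IsCompact K) {g : E3 → ℝ} (hg : Continuous g)
    (h0 : ∀ x ∉ K, g x = 0) : Integrable g :=
  hg.integrable_of_hasCompactSupport (HasCompactSupport.intro hK h0)

lemma fderiv_zero_outside (hK : IsCompact K) {G : Type*} [NormedAddCommGroup G]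
    [NormedSpace ℝ G] {g : E3 → G} (h0 : ∀ x ∉ K, g x = 0) {x : E3} (hx : x ∉ K) :
    fderiv ℝ g x = 0 := by
  have : g =ᶠ[nhds x] (fun _ => 0) :=
    Filter.eventuallyEq_of_mem (hK.isClosed.isOpen_compl.mem_nhds hx) fun y hy => h0 y hy
  rw [this.fderiv_eq]
  exact fderiv_const_apply 0

lemma cont_pd {g : E3 → ℝ} (hg : ContDiff ℝ ∞ g) (v : E3) :
    Continuous fun x => fderiv ℝ g x v :=
  ((hg.fderiv_right (m := ∞) le_rfl).clm_apply contDiff_const).continuous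

lemma contDiff_pd {g : E3 → ℝ} (hg : ContDiff ℝ ∞ g) (v : E3) :
    ContDiff ℝ ∞ fun x => fderiv ℝ g x v :=
  (hg.fderiv_right (m := ∞) le_rfl).clm_apply contDiff_const

lemma cutoff (hK : IsCompact K) :
    ∃ χ : E3 → ℝ, ContDiff ℝ ∞ χ ∧ HasCompactSupport χ ∧
      (∀ x ∈ K, χ x = 1) ∧ (∀ x ∈ K, fderiv ℝ χ x = 0) := by
  obtain ⟨f, hf1, hf0, hficc⟩ :=
    exists_contMDiffMap_one_nhds_of_subset_interior (I := modelWithCornersSelf ℝ E3) (n := (⊤ : ℕ∞))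
      (s := K) (t := Metric.cthickening 1 K) hK.isClosed
      (by
        refine subset_trans ?_ (interior_maximal (Metric.thickening_subset_cthickening 1 K)
          Metric.isOpen_thickening)
        exact Metric.self_subset_thickening one_pos K)
  have hsm : ContDiff ℝ ∞ (f : E3 → ℝ) := by
    have := f.contMDiff
    rw [contMDiff_iff_contDiff] at this
    exact this
  have h1 : ∀ᶠ x in nhdsSet K, f x = 1 := hf1
  refine ⟨f, hsm, HasCompactSupport.intro hK.cthickening hf0,
    fun x hx => h1.self_of_nhdsSet x hx, fun x hx => ?_⟩
  have hx' : ∀ᶠ y in nhds x, (f : E3 → ℝ) y = 1 := h1.filter_mono (nhds_le_nhdsSet hx)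
  rw [Filter.EventuallyEq.fderiv_eq (hx'.mono fun y hy => hy)]
  exact fderiv_const_apply 1

lemma integral_pd_eq_zero (hK : IsCompact K) {g : E3 → ℝ} (hg : ContDiff ℝ ∞ g)
    (h0 : ∀ x ∉ K, g x = 0) (v : E3) : ∫ x : E3, fderiv ℝ g x v = 0 := by
  obtain ⟨χ, hχ, hχc, hχ1, hχ'⟩ := cutoff hK
  have hgd : Differentiable ℝ g := hg.differentiable (by norm_num)
  have hχd : Differentiable ℝ χ := hχ.differentiable (by norm_num)
  have hpd0 : ∀ x ∉ K, fderiv ℝ g x v = 0 := fun x hx => by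
    rw [fderiv_zero_outside hK h0 hx]; rfl
  have e1 : (fun x => χ x * fderiv ℝ g x v) = fun x => fderiv ℝ g x v := by
    funext x
    by_cases hx : x ∈ K
    · rw [hχ1 x hx, one_mul]
    · rw [hpd0 x hx, mul_zero]
  have e2 : (fun x => fderiv ℝ χ x v * g x) = fun _ => (0 : ℝ) := by
    funext x
    by_cases hx : x ∈ K
    · rw [hχ' x hx]; simp
    · rw [h0 x hx, mul_zero]
  have h := integral_mul_fderiv_eq_neg_fderiv_mul_of_integrable
    (f := χ) (g := g) (v := v) (μ := volume)
    (by rw [e2]; exact integrable_zero _ _ _)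
    (by rw [e1]; exact integrable_supp hK (cont_pd hg v) hpd0)
    (integrable_supp hK (hχ.continuous.mul hg.continuous)
      (fun x hx => by rw [h0 x hx, mul_zero]))
    (fun x _ => hχd x) (fun x _ => hgd x)
  rw [e1, e2] at h
  simpa using h

lemma integral_pd_mul (hK : IsCompact K) {f g : E3 → ℝ} (hf : ContDiff ℝ ∞ f)
    (hg : ContDiff ℝ ∞ g) (hf0 : ∀ x ∉ K, f x = 0) (v : E3) :
    ∫ x : E3, fderiv ℝ f x v * g x = - ∫ x : E3, f x * fderiv ℝ g x v := by
  have hfd : Differentiable ℝ f := hf.differentiable (by norm_num)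
  have hgd : Differentiable ℝ g := hg.differentiable (by norm_num)
  have key := integral_pd_eq_zero hK (hf.mul hg)
    (fun x hx => by rw [hf0 x hx, zero_mul]) v
  have e : (fun x => fderiv ℝ (fun y => f y * g y) x v)
      = fun x => fderiv ℝ f x v * g x + f x * fderiv ℝ g x v := by
    funext x
    rw [fderiv_fun_mul (hfd x) (hgd x)]
    simp; ring
  rw [e] at key
  have i1 : Integrable (fun x => fderiv ℝ f x v * g x) :=
    integrable_supp hK ((cont_pd hf v).mul hg.continuous)
      (fun x hx => by rw [fderiv_zero_outside hK hf0 hx]; simp)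
  have i2 : Integrable (fun x => f x * fderiv ℝ g x v) :=
    integrable_supp hK (hf.continuous.mul (cont_pd hg v))
      (fun x hx => by rw [hf0 x hx, zero_mul])
  rw [integral_add i1 i2] at key
  linarith

lemma hasDerivAt_slice {w : ℝ × E3 → E3} (hw : ContDiff ℝ ∞ w) (s : ℝ) (x : E3) :
    HasDerivAt (fun r => w (r, x)) (fderiv ℝ w (s, x) (1, 0)) s := by
  have h1 : HasDerivAt (fun r : ℝ => (r, x)) ((1 : ℝ), (0 : E3)) s := by
    simpa using (hasDerivAt_id s).prodMk (hasDerivAt_const s x)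
  exact (hw.differentiable (by norm_num) (s, x)).hasFDerivAt.comp_hasDerivAt s h1

lemma hasDerivAt_energy (hK : IsCompact K) {w : ℝ × E3 → E3} (hw : ContDiff ℝ ∞ w)
    (h0 : ∀ (t : ℝ) (x : E3), x ∉ K → w (t, x) = 0) (t : ℝ) :
    HasDerivAt (fun s : ℝ => ∫ x : E3, ‖w (s, x)‖ ^ 2)
      (∫ x : E3, 2 * ⟪fderiv ℝ w (t, x) (1, 0), w (t, x)⟫) t := by
  have hwc : Continuous w := hw.continuous
  have hc' : Continuous fun q : ℝ × E3 => 2 * ⟪fderiv ℝ w q (1, 0), w q⟫ := by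
    have h1 : Continuous fun q : ℝ × E3 => fderiv ℝ w q (1, 0) :=
      ((hw.fderiv_right (m := ∞) le_rfl).clm_apply contDiff_const).continuous
    exact continuous_const.mul (h1.inner hwc)
  obtain ⟨C, hC⟩ := ((isCompact_Icc (a := t - 1) (b := t + 1)).prod hK).exists_bound_of_continuousOn
    hc'.continuousOn
  have key := hasDerivAt_integral_of_dominated_loc_of_deriv_le (μ := volume)
    (F := fun s x => ‖w (s, x)‖ ^ 2)
    (F' := fun s x => 2 * ⟪fderiv ℝ w (s, x) (1, 0), w (s, x)⟫)
    (x₀ := t) (bound := K.indicator fun _ => max C 0) (s := Metric.ball t 1) (Metric.ball_mem_nhds t one_pos)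
    ?_ ?_ ?_ ?_ ?_ ?_
  · exact key.2
  · refine Filter.Eventually.of_forall fun s => Continuous.aestronglyMeasurable ?_
    exact (hwc.comp (continuous_const.prodMk continuous_id)).norm.pow 2
  · refine integrable_supp hK ?_ ?_
    · exact (hwc.comp (continuous_const.prodMk continuous_id)).norm.pow 2
    · intro x hx; simp only [h0 t x hx]; simp
  · refine Continuous.aestronglyMeasurable ?_
    exact hc'.comp (continuous_const.prodMk continuous_id)
  · refine Filter.Eventually.of_forall fun x s hs => ?_
    by_cases hx : x ∈ K
    · rw [Set.indicator_of_mem hx]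
      refine le_trans (hC (s, x) ⟨?_, hx⟩) (le_max_left _ _)
      have := abs_lt.1 ((by simpa [Real.dist_eq] using mem_ball.mp hs))
      constructor <;> [linarith [this.1]; linarith [this.2]]
    · rw [Set.indicator_of_notMem hx]
      simp only [h0 s x hx]
      simp
  · exact (integrable_indicator_iff hK.measurableSet).2
      ((integrableOn_const hK.measure_lt_top.ne))
  · refine Filter.Eventually.of_forall fun x s _ => ?_
    have h1 := hasDerivAt_slice hw s x
    have h2 := h1.inner ℝ h1
    have e : (fun r => ⟪w (r, x), w (r, x)⟫) = fun r => ‖w (r, x)‖ ^ 2 := by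
      funext r; rw [real_inner_self_eq_norm_sq]
    rw [e] at h2
    exact h2.congr_deriv (by rw [real_inner_comm]; ring)

def ee (i : Fin 3) : E3 := EuclideanSpace.single i 1

lemma inner3 (a b : E3) : ⟪a, b⟫ = ∑ i, a i * b i := by
  simp [PiLp.inner_apply, RCLike.inner_apply, mul_comm]

lemma contDiff_comp3 {U : E3 → E3} (hU : ContDiff ℝ ∞ U) (i : Fin 3) :
    ContDiff ℝ ∞ (fun y => U y i) :=
  (EuclideanSpace.proj (𝕜 := ℝ) i).contDiff.comp hU

lemma fderiv_comp3 {U : E3 → E3} (hU : Differentiable ℝ U) (i : Fin 3) (x v : E3) :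
    fderiv ℝ (fun y => U y i) x v = fderiv ℝ U x v i := by
  have h : HasFDerivAt (fun y => (EuclideanSpace.proj (𝕜 := ℝ) i) (U y))
      ((EuclideanSpace.proj (𝕜 := ℝ) i).comp (fderiv ℝ U x)) x :=
    (EuclideanSpace.proj (𝕜 := ℝ) i).hasFDerivAt.comp x (hU x).hasFDerivAt
  have := congrFun (congrArg DFunLike.coe h.fderiv) v
  simpa using this

lemma decomp3 (w : E3) : w = ∑ j, w j • ee j := by
  ext i
  simp [ee, Fin.sum_univ_three, EuclideanSpace.single_apply]
  fin_cases i <;> simp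

example (P : E3 → ℝ) (hP : Differentiable ℝ P) (U : E3 → E3) (x : E3) :
  ⟪grad3 P x, U x⟫ = ∑ i, fderiv ℝ P x (ee i) * U x i := by
  rw [inner3]
  simp [grad3, Fin.sum_univ_three, ee]

example (A : E3 → E3) (C : E3 → E3) (x : E3) (hA : Differentiable ℝ A) :
  ⟪curl3 A x, C x⟫ =
    (fderiv ℝ (fun y => A y 2) x (ee 1) - fderiv ℝ (fun y => A y 1) x (ee 2)) * C x 0
    + (fderiv ℝ (fun y => A y 0) x (ee 2) - fderiv ℝ (fun y => A y 2) x (ee 0)) * C x 1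
    + (fderiv ℝ (fun y => A y 1) x (ee 0) - fderiv ℝ (fun y => A y 0) x (ee 1)) * C x 2 := by
  rw [inner3]
  simp [curl3, Fin.sum_univ_three, pd, fderiv_comp3 hA, ee]

lemma int_mul_supp (hK : IsCompact K) {f g : E3 → ℝ} (hf : Continuous f) (hg : Continuous g)
    (h0 : ∀ x ∉ K, g x = 0) : Integrable (fun x => f x * g x) :=
  integrable_supp hK (hf.mul hg) (fun x hx => by rw [h0 x hx, mul_zero])

lemma comp_supp {U : E3 → E3} (hU0 : ∀ x ∉ K, U x = 0) (i : Fin 3) :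
    ∀ x ∉ K, U x i = 0 := fun x hx => by rw [hU0 x hx]; rfl

lemma sum_parts_div (hK : IsCompact K) {U : E3 → E3} (hU : ContDiff ℝ ∞ U)
    (hU0 : ∀ x ∉ K, U x = 0) (hdiv : ∀ x, div3 U x = 0)
    {g : E3 → ℝ} (hg : ContDiff ℝ ∞ g) (hg0 : ∀ x ∉ K, g x = 0) :
    ∑ i, ∫ x : E3, fderiv ℝ g x (ee i) * U x i = 0 := by
  have hUd : Differentiable ℝ U := hU.differentiable (by norm_num)
  have h1 : ∀ i : Fin 3, (∫ x : E3, fderiv ℝ g x (ee i) * U x i)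
      = - ∫ x : E3, g x * fderiv ℝ (fun y => U y i) x (ee i) := by
    intro i
    have h := integral_pd_mul hK hg (contDiff_comp3 hU i) hg0 (ee i)
    calc ∫ x : E3, fderiv ℝ g x (ee i) * U x i
        = ∫ x : E3, fderiv ℝ g x (ee i) * (fun y => U y i) x := by norm_num
      _ = - ∫ x : E3, g x * fderiv ℝ (fun y => U y i) x (ee i) := h
  simp only [h1, Finset.sum_neg_distrib]
  rw [neg_eq_zero, ← integral_finset_sum]
  · have e : ∀ x : E3, ∑ i, g x * fderiv ℝ (fun y => U y i) x (ee i) = g x * div3 U x := by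
      intro x
      rw [div3, Finset.mul_sum]
      refine Finset.sum_congr rfl fun i _ => ?_
      rw [pd, ← fderiv_comp3 hUd i x]
      rfl
    simp only [e, hdiv, mul_zero, integral_zero, neg_zero]
  · intro i _
    exact integrable_supp hK (hg.continuous.mul (cont_pd (contDiff_comp3 hU i) (ee i)))
      (fun x hx => by rw [hg0 x hx, zero_mul])

lemma pressure_integral (hK : IsCompact K) {P : E3 → ℝ} {U : E3 → E3}
    (hP : ContDiff ℝ ∞ P) (hP0 : ∀ x ∉ K, P x = 0) (hU : ContDiff ℝ ∞ U)
    (hU0 : ∀ x ∉ K, U x = 0) (hdiv : ∀ x, div3 U x = 0) :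
    ∫ x : E3, ⟪grad3 P x, U x⟫ = 0 := by
  have e : (fun x => ⟪grad3 P x, U x⟫) = fun x => ∑ i, fderiv ℝ P x (ee i) * U x i := by
    funext x
    rw [inner3]
    simp [grad3, Fin.sum_univ_three, ee]
  rw [e, integral_finset_sum]
  · exact sum_parts_div hK hU hU0 hdiv hP hP0
  · intro i _
    exact int_mul_supp hK (cont_pd hP (ee i)) ((contDiff_comp3 hU i).continuous)
      (comp_supp hU0 i)

lemma fd_mul {f g : E3 → ℝ} {x : E3} (hf : DifferentiableAt ℝ f x)
    (hg : DifferentiableAt ℝ g x) (v : E3) :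
    fderiv ℝ (fun y => f y * g y) x v = fderiv ℝ f x v * g x + f x * fderiv ℝ g x v := by
  rw [fderiv_fun_mul hf hg]; simp; ring

lemma fderiv_energy_density {U : E3 → E3} (hU : ContDiff ℝ ∞ U) (x v : E3) :
    fderiv ℝ (fun y => (1:ℝ)/2 * ∑ i, (U y i)^2) x v
      = ∑ i, U x i * fderiv ℝ (fun y => U y i) x v := by
  have hd : ∀ i : Fin 3, DifferentiableAt ℝ (fun y => U y i) x :=
    fun i => ((contDiff_comp3 hU i).differentiable (by norm_num)) x
  have hsq : ∀ i : Fin 3, DifferentiableAt ℝ (fun y => (U y i)^2) x := by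
    intro i
    have : (fun y => (U y i)^2) = fun y => U y i * U y i := by funext y; ring
    rw [this]; exact (hd i).mul (hd i)
  have e : (fun y => (1:ℝ)/2 * ∑ i, (U y i)^2)
      = fun y => (1:ℝ)/2 * ((U y 0)^2 + (U y 1)^2 + (U y 2)^2) := by
    funext y; rw [Fin.sum_univ_three]
  have hsq' : ∀ i : Fin 3, fderiv ℝ (fun y => (U y i)^2) x v
      = 2 * U x i * fderiv ℝ (fun y => U y i) x v := by
    intro i
    have e2 : (fun y => (U y i)^2) = fun y => U y i * U y i := by funext y; ring
    rw [e2, fd_mul (hd i) (hd i)]; ring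
  rw [e, fderiv_const_mul (((hsq 0).fun_add (hsq 1)).fun_add (hsq 2))]
  simp only [ContinuousLinearMap.coe_smul', Pi.smul_apply, smul_eq_mul]
  rw [fderiv_fun_add ((hsq 0).fun_add (hsq 1)) (hsq 2), fderiv_fun_add (hsq 0) (hsq 1)]
  simp only [ContinuousLinearMap.add_apply]
  rw [hsq' 0, hsq' 1, hsq' 2, Fin.sum_univ_three]
  ring

lemma advection_integral (hK : IsCompact K) {U : E3 → E3} (hU : ContDiff ℝ ∞ U)
    (hU0 : ∀ x ∉ K, U x = 0) (hdiv : ∀ x, div3 U x = 0) :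
    ∫ x : E3, ⟪fderiv ℝ U x (U x), U x⟫ = 0 := by
  have hUd : Differentiable ℝ U := hU.differentiable (by norm_num)
  set g : E3 → ℝ := fun y => (1:ℝ)/2 * ∑ i, (U y i)^2 with hgdef
  have hg : ContDiff ℝ ∞ g :=
    contDiff_const.mul (ContDiff.sum fun i _ => (contDiff_comp3 hU i).pow 2)
  have hg0 : ∀ x ∉ K, g x = 0 := by
    intro x hx
    simp only [hgdef, comp_supp hU0 _ x hx]
    norm_num
  have e : (fun x => ⟪fderiv ℝ U x (U x), U x⟫)
      = fun x => ∑ j, fderiv ℝ g x (ee j) * U x j := by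
    funext x
    have hdec : fderiv ℝ U x (U x) = ∑ j, U x j • fderiv ℝ U x (ee j) := by
      conv_lhs => rw [decomp3 (U x)]
      rw [map_sum]
      exact Finset.sum_congr rfl fun j _ => by rw [_root_.map_smul]
    rw [inner3]
    simp only [hgdef, fderiv_energy_density hU]
    rw [Fin.sum_univ_three, Fin.sum_univ_three]
    simp only [hdec, Fin.sum_univ_three, PiLp.add_apply, PiLp.smul_apply, smul_eq_mul]
    simp only [fderiv_comp3 hUd]
    ring
  rw [e, integral_finset_sum]
  · exact sum_parts_div hK hU hU0 hdiv hg hg0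
  · intro j _
    exact int_mul_supp hK (cont_pd hg (ee j)) ((contDiff_comp3 hU j).continuous)
      (comp_supp hU0 j)

lemma laplacian_integral (hK : IsCompact K) {U : E3 → E3} (hU : ContDiff ℝ ∞ U)
    (hU0 : ∀ x ∉ K, U x = 0) :
    ∫ x : E3, ⟪lap3 U x, U x⟫ = - ∫ x : E3, gradNormSq U x := by
  have hUd : Differentiable ℝ U := hU.differentiable (by norm_num)
  have hci : ∀ i : Fin 3, ContDiff ℝ ∞ (fun y => U y i) := contDiff_comp3 hU
  have hfij : ∀ i j : Fin 3, ContDiff ℝ ∞ (fun y => fderiv ℝ (fun z => U z i) y (ee j)) :=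
    fun i j => contDiff_pd (hci i) (ee j)
  have hfij0 : ∀ i j : Fin 3, ∀ x ∉ K, fderiv ℝ (fun z => U z i) x (ee j) = 0 :=
    fun i j x hx => by rw [fderiv_zero_outside hK (comp_supp hU0 i) hx]; rfl
  have hint : ∀ i j : Fin 3, Integrable
      (fun x => fderiv ℝ (fun y => fderiv ℝ (fun z => U z i) y (ee j)) x (ee j) * U x i) :=
    fun i j => int_mul_supp hK (cont_pd (hfij i j) (ee j)) (hci i).continuous (comp_supp hU0 i)
  have e : (fun x => ⟪lap3 U x, U x⟫) = fun x => ∑ i, ∑ j,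
      fderiv ℝ (fun y => fderiv ℝ (fun z => U z i) y (ee j)) x (ee j) * U x i := by
    funext x
    rw [inner3]
    refine Finset.sum_congr rfl fun i _ => ?_
    rw [← Finset.sum_mul]
    congr 1
    have hWd : ∀ j : Fin 3, Differentiable ℝ (fun y => fderiv ℝ U y (ee j)) := fun j =>
      ((hU.fderiv_right (m := ∞) le_rfl).clm_apply contDiff_const).differentiable (by norm_num)
    have e1 : ∀ j : Fin 3, fderiv ℝ (fun y => fderiv ℝ (fun z => U z i) y (ee j)) x (ee j)
        = fderiv ℝ (fun y => fderiv ℝ U y (ee j)) x (ee j) i := by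
      intro j
      have e2 : (fun y => fderiv ℝ (fun z => U z i) y (ee j))
          = fun y => (fderiv ℝ U y (ee j)) i := by
        funext y; exact fderiv_comp3 hUd i y (ee j)
      rw [e2, fderiv_comp3 (hWd j) i x (ee j)]
    simp only [e1]
    simp [lap3, ee, Fin.sum_univ_three]
  rw [e, integral_finset_sum _ (fun i _ => integrable_finset_sum _ (fun j _ => hint i j))]
  have e4 : ∀ i j : Fin 3,
      (∫ x : E3, fderiv ℝ (fun y => fderiv ℝ (fun z => U z i) y (ee j)) x (ee j) * U x i)
      = - ∫ x : E3, (fderiv ℝ (fun z => U z i) x (ee j))^2 := by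
    intro i j
    have h := integral_pd_mul hK (hfij i j) (hci i) (hfij0 i j) (ee j)
    rw [h]
    congr 1
    refine integral_congr_ae (Filter.Eventually.of_forall fun x => ?_)
    ring
  have e5 : (fun x => gradNormSq U x)
      = fun x => ∑ i, ∑ j, (fderiv ℝ (fun z => U z i) x (ee j))^2 := by
    funext x
    rw [gradNormSq]
    refine Finset.sum_congr rfl fun i _ => Finset.sum_congr rfl fun j _ => ?_
    rw [fderiv_comp3 hUd i x]
    rfl
  have hint2 : ∀ i j : Fin 3, Integrable (fun x => (fderiv ℝ (fun z => U z i) x (ee j))^2) :=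
    fun i j => integrable_supp hK ((cont_pd (hci i) (ee j)).pow 2)
      (fun x hx => by rw [hfij0 i j x hx]; ring)
  rw [e5, integral_finset_sum _ (fun i _ => integrable_finset_sum _ (fun j _ => hint2 i j))]
  rw [← Finset.sum_neg_distrib]
  refine Finset.sum_congr rfl fun i _ => ?_
  rw [integral_finset_sum _ (fun j _ => hint i j),
    integral_finset_sum _ (fun j _ => hint2 i j), ← Finset.sum_neg_distrib]
  exact Finset.sum_congr rfl fun j _ => e4 i j

lemma contDiff_curl3 {A : E3 → E3} (hA : ContDiff ℝ ∞ A) :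
    ContDiff ℝ ∞ (fun x => curl3 A x) := by
  have h1 : ∀ i j : Fin 3, ContDiff ℝ ∞ (fun x => fderiv ℝ A x (EuclideanSpace.single j 1) i) :=
    fun i j => contDiff_comp3 ((hA.fderiv_right (m := ∞) le_rfl).clm_apply contDiff_const) i
  have e : (fun x => curl3 A x) = fun x =>
      (PiLp.continuousLinearEquiv 2 ℝ (fun _ : Fin 3 => ℝ)).symm
        ![pd 1 A x 2 - pd 2 A x 1, pd 2 A x 0 - pd 0 A x 2, pd 0 A x 1 - pd 1 A x 0] := rfl
  have hv : ContDiff ℝ ∞ (fun x => (![pd 1 A x 2 - pd 2 A x 1, pd 2 A x 0 - pd 0 A x 2,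
      pd 0 A x 1 - pd 1 A x 0] : Fin 3 → ℝ)) := by
    rw [contDiff_pi]
    intro i
    fin_cases i <;> simp [pd] <;> exact ContDiff.sub (h1 _ _) (h1 _ _)
  rw [e]
  exact ((PiLp.continuousLinearEquiv 2 ℝ (fun _ : Fin 3 => ℝ)).symm.contDiff (n := ∞)).comp hv

lemma fd_sub {f g : E3 → ℝ} {x : E3} (hf : DifferentiableAt ℝ f x)
    (hg : DifferentiableAt ℝ g x) (v : E3) :
    fderiv ℝ (fun y => f y - g y) x v = fderiv ℝ f x v - fderiv ℝ g x v := by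
  rw [fderiv_fun_sub hf hg]; rfl

lemma curl_integral (hK : IsCompact K) {A C : E3 → E3} (hA : ContDiff ℝ ∞ A)
    (hA0 : ∀ x ∉ K, A x = 0) (hC : ContDiff ℝ ∞ C) (hC0 : ∀ x ∉ K, C x = 0) :
    ∫ x : E3, ⟪curl3 A x, C x⟫ = ∫ x : E3, ⟪A x, curl3 C x⟫ := by
  have hAd : Differentiable ℝ A := hA.differentiable (by norm_num)
  have hCd : Differentiable ℝ C := hC.differentiable (by norm_num)
  have hai : ∀ i : Fin 3, ContDiff ℝ ∞ (fun y => A y i) := contDiff_comp3 hA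
  have hci : ∀ i : Fin 3, ContDiff ℝ ∞ (fun y => C y i) := contDiff_comp3 hC
  have hdai : ∀ (i : Fin 3) (x : E3), DifferentiableAt ℝ (fun y => A y i) x := fun i x =>
    ((hai i).differentiable (by norm_num)) x
  have hdci : ∀ (i : Fin 3) (x : E3), DifferentiableAt ℝ (fun y => C y i) x := fun i x =>
    ((hci i).differentiable (by norm_num)) x
  set g : Fin 3 → E3 → ℝ := ![fun y => A y 1 * C y 2 - A y 2 * C y 1,
    fun y => A y 2 * C y 0 - A y 0 * C y 2,
    fun y => A y 0 * C y 1 - A y 1 * C y 0] with hgdef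
  have hg : ∀ j : Fin 3, ContDiff ℝ ∞ (g j) := by
    intro j
    fin_cases j <;> simp [hgdef] <;>
      exact ((hai _).mul (hci _)).sub ((hai _).mul (hci _))
  have hg0 : ∀ j : Fin 3, ∀ x ∉ K, g j x = 0 := by
    intro j x hx
    have h0 := comp_supp hA0 0 x hx
    have h1 := comp_supp hA0 1 x hx
    have h2 := comp_supp hA0 2 x hx
    fin_cases j <;> simp [hgdef, h0, h1, h2, Matrix.vecHead, Matrix.vecTail]
  have i1 : Integrable (fun x => ⟪curl3 A x, C x⟫) :=
    integrable_supp hK ((contDiff_curl3 hA).continuous.inner hC.continuous)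
      (fun x hx => by rw [hC0 x hx, inner_zero_right])
  have i2 : Integrable (fun x => ⟪A x, curl3 C x⟫) :=
    integrable_supp hK (hA.continuous.inner (contDiff_curl3 hC).continuous)
      (fun x hx => by rw [hA0 x hx, inner_zero_left])
  rw [← sub_eq_zero, ← integral_sub i1 i2]
  have e : (fun x => ⟪curl3 A x, C x⟫ - ⟪A x, curl3 C x⟫)
      = fun x => ∑ j, fderiv ℝ (g j) x (ee j) := by
    funext x
    rw [Fin.sum_univ_three]
    simp only [hgdef, Matrix.cons_val_zero, Matrix.cons_val_one, Matrix.head_cons,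
      Matrix.cons_val_two, Matrix.tail_cons]
    rw [fd_sub ((hdai 1 x).fun_mul (hdci 2 x)) ((hdai 2 x).fun_mul (hdci 1 x)),
      fd_sub ((hdai 2 x).fun_mul (hdci 0 x)) ((hdai 0 x).fun_mul (hdci 2 x)),
      fd_sub ((hdai 0 x).fun_mul (hdci 1 x)) ((hdai 1 x).fun_mul (hdci 0 x)),
      fd_mul (hdai 1 x) (hdci 2 x), fd_mul (hdai 2 x) (hdci 1 x),
      fd_mul (hdai 2 x) (hdci 0 x), fd_mul (hdai 0 x) (hdci 2 x),
      fd_mul (hdai 0 x) (hdci 1 x), fd_mul (hdai 1 x) (hdci 0 x)]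
    rw [inner3, inner3]
    simp only [curl3, pd, Fin.sum_univ_three, WithLp.equiv_symm_apply, WithLp.ofLp_toLp,
      Matrix.cons_val_zero, Matrix.cons_val_one, Matrix.head_cons,
      Matrix.cons_val_two, Matrix.tail_cons]
    simp only [fderiv_comp3 hAd, fderiv_comp3 hCd]
    simp only [ee]
    ring
  rw [e, integral_finset_sum]
  · exact Finset.sum_eq_zero fun j _ => integral_pd_eq_zero hK (hg j) (hg0 j) (ee j)
  · intro j _
    exact integrable_supp hK (cont_pd (hg j) (ee j))
      (fun x hx => by rw [fderiv_zero_outside hK (hg0 j) hx]; rfl)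

lemma contDiff_grad3 {P : E3 → ℝ} (hP : ContDiff ℝ ∞ P) :
    ContDiff ℝ ∞ (fun x => grad3 P x) := by
  have h1 : ∀ j : Fin 3, ContDiff ℝ ∞ (fun x => fderiv ℝ P x (EuclideanSpace.single j 1)) :=
    fun j => contDiff_pd hP _
  have hv : ContDiff ℝ ∞ (fun x => (![fderiv ℝ P x (EuclideanSpace.single 0 1),
      fderiv ℝ P x (EuclideanSpace.single 1 1),
      fderiv ℝ P x (EuclideanSpace.single 2 1)] : Fin 3 → ℝ)) := by
    rw [contDiff_pi]
    intro i
    fin_cases i <;> simpa using h1 _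
  exact ((PiLp.continuousLinearEquiv 2 ℝ (fun _ : Fin 3 => ℝ)).symm.contDiff (n := ∞)).comp hv

lemma contDiff_lap3 {U : E3 → E3} (hU : ContDiff ℝ ∞ U) :
    ContDiff ℝ ∞ (fun x => lap3 U x) := by
  refine ContDiff.sum fun j _ => ?_
  have hW : ContDiff ℝ ∞ (fun y => fderiv ℝ U y (EuclideanSpace.single j 1)) :=
    (hU.fderiv_right (m := ∞) le_rfl).clm_apply contDiff_const
  exact (hW.fderiv_right (m := ∞) le_rfl).clm_apply contDiff_const

lemma contDiff_cross3 {A C : E3 → E3} (hA : ContDiff ℝ ∞ A) (hC : ContDiff ℝ ∞ C) :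
    ContDiff ℝ ∞ (fun x => cross3 (A x) (C x)) := by
  have hv : ContDiff ℝ ∞ (fun x => (![A x 1 * C x 2 - A x 2 * C x 1,
      A x 2 * C x 0 - A x 0 * C x 2, A x 0 * C x 1 - A x 1 * C x 0] : Fin 3 → ℝ)) := by
    rw [contDiff_pi]
    intro i
    fin_cases i <;> simp <;>
      exact ((contDiff_comp3 hA _).mul (contDiff_comp3 hC _)).sub
        ((contDiff_comp3 hA _).mul (contDiff_comp3 hC _))
  have e : (fun x => cross3 (A x) (C x)) = fun x =>
      (PiLp.continuousLinearEquiv 2 ℝ (fun _ : Fin 3 => ℝ)).symm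
        ![A x 1 * C x 2 - A x 2 * C x 1, A x 2 * C x 0 - A x 0 * C x 2,
          A x 0 * C x 1 - A x 1 * C x 0] := by
    funext x
    simp only [cross3, crossProduct]
    rfl
  rw [e]
  exact ((PiLp.continuousLinearEquiv 2 ℝ (fun _ : Fin 3 => ℝ)).symm.contDiff (n := ∞)).comp hv

lemma ohm_alg (uu bb jj : E3) : ⟪jj - cross3 uu bb, jj⟫ = ‖jj‖^2 + ⟪cross3 jj bb, uu⟫ := by
  rw [← real_inner_self_eq_norm_sq]
  simp [cross3, crossProduct, PiLp.inner_apply, RCLike.inner_apply, Fin.sum_univ_three,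
    EuclideanSpace.real_norm_sq_eq]
  ring

end MHDAux

open scoped ContDiff

/-- Theorem 2, energy identity for classical solutions of the
MHD system:
`½ d/dt‖u‖² + (S/2Rm) d/dt‖B‖² + (1/Re)‖∇u‖² + S‖j‖² = (f, u)`. -/
theorem mhd_energy_identity
    (Re Rm S : ℝ) (hRe : 0 < Re) (hRm : 0 < Rm) (hS : 0 < S)
    (u B E j f : ℝ × E3 → E3) (p : ℝ × E3 → ℝ)
    (hu : ContDiff ℝ (⊤ : ℕ∞) u) (hB : ContDiff ℝ (⊤ : ℕ∞) B) (hE : ContDiff ℝ (⊤ : ℕ∞) E)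
    (hj : ContDiff ℝ (⊤ : ℕ∞) j) (hf : ContDiff ℝ (⊤ : ℕ∞) f) (hp : ContDiff ℝ (⊤ : ℕ∞) p)
    (K : Set E3) (hK : IsCompact K)
    (hsupp : ∀ (t : ℝ) (x : E3), x ∉ K →
      u (t, x) = 0 ∧ B (t, x) = 0 ∧ E (t, x) = 0 ∧ j (t, x) = 0 ∧
        p (t, x) = 0 ∧ f (t, x) = 0)
    (momentum : ∀ (t : ℝ) (x : E3),
      deriv (fun s => u (s, x)) t + fderiv ℝ (fun y => u (t, y)) x (u (t, x))
          - (1 / Re) • lap3 (fun y => u (t, y)) x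
          - S • cross3 (j (t, x)) (B (t, x))
          + grad3 (fun y => p (t, y)) x = f (t, x))
    (ampere : ∀ (t : ℝ) (x : E3),
      j (t, x) = (1 / Rm) • curl3 (fun y => B (t, y)) x)
    (faraday : ∀ (t : ℝ) (x : E3),
      deriv (fun s => B (s, x)) t + curl3 (fun y => E (t, y)) x = 0)
    (incomp : ∀ (t : ℝ) (x : E3), div3 (fun y => u (t, y)) x = 0)
    (ohm : ∀ (t : ℝ) (x : E3),
      j (t, x) = E (t, x) + cross3 (u (t, x)) (B (t, x))) :
    ∀ t : ℝ,
      DifferentiableAt ℝ (fun s : ℝ => ∫ x : E3, ‖u (s, x)‖ ^ 2) t ∧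
      DifferentiableAt ℝ (fun s : ℝ => ∫ x : E3, ‖B (s, x)‖ ^ 2) t ∧
      (1 / 2) * deriv (fun s : ℝ => ∫ x : E3, ‖u (s, x)‖ ^ 2) t
          + (S / (2 * Rm)) * deriv (fun s : ℝ => ∫ x : E3, ‖B (s, x)‖ ^ 2) t
          + (1 / Re) * (∫ x : E3, gradNormSq (fun y => u (t, y)) x)
          + S * (∫ x : E3, ‖j (t, x)‖ ^ 2)
        = ∫ x : E3, ⟪f (t, x), u (t, x)⟫ := by
  intro t
  have hu' : ContDiff ℝ ∞ u := hu.of_le (by simp)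
  have hB' : ContDiff ℝ ∞ B := hB.of_le (by simp)
  have hE' : ContDiff ℝ ∞ E := hE.of_le (by simp)
  have hj' : ContDiff ℝ ∞ j := hj.of_le (by simp)
  have hf' : ContDiff ℝ ∞ f := hf.of_le (by simp)
  have hp' : ContDiff ℝ ∞ p := hp.of_le (by simp)
  have hslice : ContDiff ℝ ∞ (fun q : E3 => ((t : ℝ), q)) := contDiff_const.prodMk contDiff_id
  have hUc : ContDiff ℝ ∞ (fun y => u (t, y)) := hu'.comp hslice
  have hBc : ContDiff ℝ ∞ (fun y => B (t, y)) := hB'.comp hslice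
  have hEc : ContDiff ℝ ∞ (fun y => E (t, y)) := hE'.comp hslice
  have hJc : ContDiff ℝ ∞ (fun y => j (t, y)) := hj'.comp hslice
  have hFc : ContDiff ℝ ∞ (fun y => f (t, y)) := hf'.comp hslice
  have hPc : ContDiff ℝ ∞ (fun y => p (t, y)) := hp'.comp hslice
  have hu0 : ∀ x ∉ K, u (t, x) = 0 := fun x hx => (hsupp t x hx).1
  have hB0 : ∀ x ∉ K, B (t, x) = 0 := fun x hx => (hsupp t x hx).2.1
  have hE0 : ∀ x ∉ K, E (t, x) = 0 := fun x hx => (hsupp t x hx).2.2.1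
  have hj0 : ∀ x ∉ K, j (t, x) = 0 := fun x hx => (hsupp t x hx).2.2.2.1
  have hp0 : ∀ x ∉ K, p (t, x) = 0 := fun x hx => (hsupp t x hx).2.2.2.2.1
  have hDu := hasDerivAt_energy hK hu' (fun s x hx => (hsupp s x hx).1) t
  have hDB := hasDerivAt_energy hK hB' (fun s x hx => (hsupp s x hx).2.1) t
  refine ⟨hDu.differentiableAt, hDB.differentiableAt, ?_⟩
  rw [hDu.deriv, hDB.deriv]
  have hmom : ∀ x : E3, ⟪fderiv ℝ u (t, x) ((1:ℝ), (0:E3)), u (t, x)⟫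
      = ⟪f (t, x), u (t, x)⟫
        - ⟪fderiv ℝ (fun y => u (t, y)) x (u (t, x)), u (t, x)⟫
        + (1 / Re) * ⟪lap3 (fun y => u (t, y)) x, u (t, x)⟫
        + S * ⟪cross3 (j (t, x)) (B (t, x)), u (t, x)⟫
        - ⟪grad3 (fun y => p (t, y)) x, u (t, x)⟫ := by
    intro x
    have h := momentum t x
    rw [(hasDerivAt_slice hu' t x).deriv] at h
    have h2 := congrArg (fun w : E3 => ⟪w, u (t, x)⟫) h
    simp only [inner_add_left, inner_sub_left, real_inner_smul_left] at h2
    linarith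
  have intF : Integrable (fun x : E3 => ⟪f (t, x), u (t, x)⟫) :=
    integrable_supp hK (hFc.continuous.inner hUc.continuous)
      (fun x hx => by rw [hu0 x hx, inner_zero_right])
  have intConv : Integrable
      (fun x : E3 => ⟪fderiv ℝ (fun y => u (t, y)) x (u (t, x)), u (t, x)⟫) :=
    integrable_supp hK
      ((((hUc.fderiv_right (m := ∞) le_rfl).clm_apply hUc).continuous).inner hUc.continuous)
      (fun x hx => by rw [hu0 x hx, inner_zero_right])
  have intLap : Integrable (fun x : E3 => ⟪lap3 (fun y => u (t, y)) x, u (t, x)⟫) :=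
    integrable_supp hK ((contDiff_lap3 hUc).continuous.inner hUc.continuous)
      (fun x hx => by rw [hu0 x hx, inner_zero_right])
  have intCross : Integrable (fun x : E3 => ⟪cross3 (j (t, x)) (B (t, x)), u (t, x)⟫) :=
    integrable_supp hK ((contDiff_cross3 hJc hBc).continuous.inner hUc.continuous)
      (fun x hx => by rw [hu0 x hx, inner_zero_right])
  have intGrad : Integrable (fun x : E3 => ⟪grad3 (fun y => p (t, y)) x, u (t, x)⟫) :=
    integrable_supp hK ((contDiff_grad3 hPc).continuous.inner hUc.continuous)
      (fun x hx => by rw [hu0 x hx, inner_zero_right])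
  have intJ2 : Integrable (fun x : E3 => ‖j (t, x)‖ ^ 2) :=
    integrable_supp hK (hJc.continuous.norm.pow 2)
      (fun x hx => by rw [hj0 x hx]; simp)
  have hIu : ∫ x : E3, ⟪fderiv ℝ u (t, x) ((1:ℝ), (0:E3)), u (t, x)⟫
      = (∫ x : E3, ⟪f (t, x), u (t, x)⟫)
        - (∫ x : E3, ⟪fderiv ℝ (fun y => u (t, y)) x (u (t, x)), u (t, x)⟫)
        + (1 / Re) * (∫ x : E3, ⟪lap3 (fun y => u (t, y)) x, u (t, x)⟫)
        + S * (∫ x : E3, ⟪cross3 (j (t, x)) (B (t, x)), u (t, x)⟫)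
        - (∫ x : E3, ⟪grad3 (fun y => p (t, y)) x, u (t, x)⟫) := by
    rw [show (fun x : E3 => ⟪fderiv ℝ u (t, x) ((1:ℝ), (0:E3)), u (t, x)⟫) = fun x =>
        (⟪f (t, x), u (t, x)⟫ - ⟪fderiv ℝ (fun y => u (t, y)) x (u (t, x)), u (t, x)⟫
          + (1 / Re) * ⟪lap3 (fun y => u (t, y)) x, u (t, x)⟫
          + S * ⟪cross3 (j (t, x)) (B (t, x)), u (t, x)⟫
          - ⟪grad3 (fun y => p (t, y)) x, u (t, x)⟫) from funext hmom]
    have i2 : Integrable (fun x : E3 => ⟪f (t, x), u (t, x)⟫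
        - ⟪fderiv ℝ (fun y => u (t, y)) x (u (t, x)), u (t, x)⟫) := intF.sub intConv
    have i3 : Integrable (fun x : E3 => ⟪f (t, x), u (t, x)⟫
        - ⟪fderiv ℝ (fun y => u (t, y)) x (u (t, x)), u (t, x)⟫
        + (1 / Re) * ⟪lap3 (fun y => u (t, y)) x, u (t, x)⟫) :=
      i2.add (intLap.const_mul _)
    have i4 : Integrable (fun x : E3 => ⟪f (t, x), u (t, x)⟫
        - ⟪fderiv ℝ (fun y => u (t, y)) x (u (t, x)), u (t, x)⟫
        + (1 / Re) * ⟪lap3 (fun y => u (t, y)) x, u (t, x)⟫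
        + S * ⟪cross3 (j (t, x)) (B (t, x)), u (t, x)⟫) :=
      i3.add (intCross.const_mul _)
    rw [integral_sub i4 intGrad, integral_add i3 (intCross.const_mul _),
      integral_add i2 (intLap.const_mul _), integral_sub intF intConv,
      integral_const_mul, integral_const_mul]
  have hAdv : (∫ x : E3, ⟪fderiv ℝ (fun y => u (t, y)) x (u (t, x)), u (t, x)⟫) = 0 :=
    advection_integral hK hUc hu0 (incomp t)
  have hLap : (∫ x : E3, ⟪lap3 (fun y => u (t, y)) x, u (t, x)⟫)
      = - ∫ x : E3, gradNormSq (fun y => u (t, y)) x :=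
    laplacian_integral hK hUc hu0
  have hPrs : (∫ x : E3, ⟪grad3 (fun y => p (t, y)) x, u (t, x)⟫) = 0 :=
    pressure_integral hK hPc hp0 hUc hu0 (incomp t)
  have hfar : ∀ x : E3, fderiv ℝ B (t, x) ((1:ℝ), (0:E3))
      = - curl3 (fun y => E (t, y)) x := by
    intro x
    have h := faraday t x
    rw [(hasDerivAt_slice hB' t x).deriv] at h
    exact eq_neg_of_add_eq_zero_left h
  have hIB : ∫ x : E3, ⟪fderiv ℝ B (t, x) ((1:ℝ), (0:E3)), B (t, x)⟫
      = - (Rm * ((∫ x : E3, ‖j (t, x)‖ ^ 2)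
          + (∫ x : E3, ⟪cross3 (j (t, x)) (B (t, x)), u (t, x)⟫))) := by
    have e1 : (fun x : E3 => ⟪fderiv ℝ B (t, x) ((1:ℝ), (0:E3)), B (t, x)⟫)
        = fun x : E3 => - ⟪curl3 (fun y => E (t, y)) x, (fun y => B (t, y)) x⟫ := by
      funext x
      rw [hfar x, inner_neg_left]
    rw [e1, integral_neg, curl_integral hK hEc hE0 hBc hB0]
    have e2 : (fun x : E3 => ⟪(fun y => E (t, y)) x, curl3 (fun y => B (t, y)) x⟫)
        = fun x : E3 => Rm * (‖j (t, x)‖ ^ 2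
            + ⟪cross3 (j (t, x)) (B (t, x)), u (t, x)⟫) := by
      funext x
      have hcurlB : curl3 (fun y => B (t, y)) x = Rm • j (t, x) := by
        rw [ampere t x, smul_smul, mul_one_div_cancel hRm.ne', one_smul]
      have hOhm : E (t, x) = j (t, x) - cross3 (u (t, x)) (B (t, x)) := by
        rw [ohm t x]; abel
      show ⟪E (t, x), curl3 (fun y => B (t, y)) x⟫ = _
      rw [hcurlB, real_inner_smul_right, hOhm, ohm_alg]
    rw [e2, integral_const_mul, integral_add intJ2 intCross]
  rw [integral_const_mul, integral_const_mul, hIu, hIB, hAdv, hLap, hPrs]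
  have hRm0 : Rm ≠ 0 := hRm.ne'
  have hRe0 : Re ≠ 0 := hRe.ne'
  field_simp
  ring
end
end

section
/- (Per-step energy inequality for the Picard-linearized scheme, Theorem 6, classical form.) Let Re, Rm, S > 0 and k > 0. Let uⁿ⁻¹, Bⁿ⁻¹, uⁿ, Bⁿ, Eⁿ, jⁿ, fⁿ : ℝ³ → ℝ³ and pⁿ : ℝ³ → ℝ all be smooth with compact support, with div uⁿ⁻¹ = 0 everywhere, and assume pointwise for all x ∈ ℝ³: (uⁿ − uⁿ⁻¹)/k + (uⁿ⁻¹·∇)uⁿ − (1/Re)Δuⁿ − S (jⁿ × Bⁿ⁻¹) + ∇pⁿ = fⁿ; jⁿ = Eⁿ + uⁿ × Bⁿ⁻¹; jⁿ = (1/Rm) curl Bⁿ; (Bⁿ − Bⁿ⁻¹)/k + curl Eⁿ = 0; div uⁿ = 0. Then ∫_{ℝ³} ‖uⁿ‖² dx + (S/Rm) ∫_{ℝ³} ‖Bⁿ‖² dx + (2k/Re) ∫_{ℝ³} ‖∇uⁿ‖² dx + 2kS ∫_{ℝ³} ‖jⁿ‖² dx ≤ ∫_{ℝ³} ‖uⁿ⁻¹‖²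 dx + (S/Rm) ∫_{ℝ³} ‖Bⁿ⁻¹‖² dx + 2k ∫_{ℝ³} fⁿ · uⁿ dx. -/
open MeasureTheory RealInnerProductSpace

noncomputable section

abbrev s3 (i : Fin 3) : E3 := EuclideanSpace.single i 1

structure Nice (f : E3 → ℝ) : Prop where
  smooth : ContDiff ℝ (⊤ : ℕ∞) f
  supp : HasCompactSupport f

theorem Nice.integrable {f : E3 → ℝ} (h : Nice f) : Integrable f :=
  h.smooth.continuous.integrable_of_hasCompactSupport h.supp

theorem Nice.mul {f g : E3 → ℝ} (hf : Nice f) (hg : Nice g) : Nice (fun x => f x * g x) :=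
  ⟨hf.smooth.mul hg.smooth, hf.supp.mul_right⟩

theorem Nice.pd {f : E3 → ℝ} (hf : Nice f) (v : E3) : Nice (fun x => fderiv ℝ f x v) :=
  ⟨(hf.smooth.fderiv_right (by simp)).clm_apply contDiff_const, hf.supp.fderiv_apply (𝕜 := ℝ) v⟩

theorem hcs_dom {g : E3 → E3} (hg : HasCompactSupport g) {f : E3 → ℝ}
    (h : ∀ x, g x = 0 → f x = 0) : HasCompactSupport f :=
  HasCompactSupport.intro hg fun x hx => h x (image_eq_zero_of_notMem_tsupport hx)

theorem nice_comp {F : E3 → E3} (hF : ContDiff ℝ (⊤ : ℕ∞) F) (hFs : HasCompactSupport F) (i : Fin 3) :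
    Nice (fun x => F x i) :=
  ⟨(EuclideanSpace.proj (𝕜 := ℝ) i).contDiff.comp hF,
   hcs_dom hFs fun x hx => by simp [hx]⟩

theorem nice_inner {F G : E3 → E3} (hF : ContDiff ℝ (⊤ : ℕ∞) F) (hG : ContDiff ℝ (⊤ : ℕ∞) G)
    (hGs : HasCompactSupport G) : Nice (fun x => ⟪F x, G x⟫) :=
  ⟨hF.inner ℝ hG, hcs_dom hGs fun x hx => by simp [hx]⟩

theorem nice_ibp {f g : E3 → ℝ} (hf : Nice f) (hg : Nice g) (v : E3) :
    ∫ x : E3, f x * fderiv ℝ g x v = - ∫ x : E3, fderiv ℝ f x v * g x := by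
  apply integral_mul_fderiv_eq_neg_fderiv_mul_of_integrable
  · exact ((hf.pd v).mul hg).integrable
  · exact (hf.mul (hg.pd v)).integrable
  · exact (hf.mul hg).integrable
  · exact fun x _ => hf.smooth.differentiable (by simp) x
  · exact fun x _ => hg.smooth.differentiable (by simp) x

theorem proj_fderiv {F : E3 → E3} (hF : Differentiable ℝ F) :
    ∀ (x v : E3) (i : Fin 3), fderiv ℝ (fun y => F y i) x v = fderiv ℝ F x v i := by
  intro x v i
  have h := ((EuclideanSpace.proj (𝕜 := ℝ) i).hasFDerivAt.comp x (hF x).hasFDerivAt).fderiv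
  have h2 : (fun y => F y i) = (EuclideanSpace.proj (𝕜 := ℝ) i) ∘ F := rfl
  rw [h2, h]; rfl

theorem contDiff_fdv {F : E3 → E3} (hF : ContDiff ℝ (⊤ : ℕ∞) F) (v : E3) :
    ContDiff ℝ (⊤ : ℕ∞) (fun x => fderiv ℝ F x v) :=
  (hF.fderiv_right (by simp)).clm_apply contDiff_const

theorem euclid_decomp (w : E3) : w = w 0 • s3 0 + w 1 • s3 1 + w 2 • s3 2 := by
  ext i
  fin_cases i <;> simp [EuclideanSpace.single_apply]

theorem int3 {f g h : E3 → ℝ} (hf : Integrable f) (hg : Integrable g) (hh : Integrable h) :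
    ∫ x : E3, (f x + g x + h x) = (∫ x : E3, f x) + (∫ x : E3, g x) + ∫ x : E3, h x := by
  calc ∫ x : E3, (f x + g x + h x) = (∫ x : E3, (f x + g x)) + ∫ x : E3, h x :=
        integral_add (hf.add hg) hh
    _ = _ := by rw [integral_add hf hg]



theorem wdz {w : E3 → E3} {φ : E3 → ℝ} (hw : ContDiff ℝ (⊤ : ℕ∞) w) (hws : HasCompactSupport w)
    (hφ : Nice φ) (hdiv : ∀ x, div3 w x = 0) :
    ∫ x : E3, fderiv ℝ φ x (w x) = 0 := by
  have hwd := hw.differentiable (by simp)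
  have hwi : ∀ i, Nice (fun x => w x i) := nice_comp hw hws
  have e1 : ∀ x : E3, fderiv ℝ φ x (w x) =
      w x 0 * fderiv ℝ φ x (s3 0) + w x 1 * fderiv ℝ φ x (s3 1) + w x 2 * fderiv ℝ φ x (s3 2) := by
    intro x
    conv_lhs => rw [euclid_decomp (w x)]
    simp [smul_eq_mul]
  have e2 : ∀ x : E3,
      fderiv ℝ (fun y => w y 0) x (s3 0) * φ x + fderiv ℝ (fun y => w y 1) x (s3 1) * φ x
        + fderiv ℝ (fun y => w y 2) x (s3 2) * φ x = 0 := by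
    intro x
    have hd := hdiv x
    simp only [div3, pd, Fin.sum_univ_three] at hd
    simp only [proj_fderiv hwd]
    show fderiv ℝ w x (s3 0) 0 * φ x + fderiv ℝ w x (s3 1) 1 * φ x
        + fderiv ℝ w x (s3 2) 2 * φ x = 0
    linear_combination φ x * hd
  calc ∫ x : E3, fderiv ℝ φ x (w x)
      = ∫ x : E3, (w x 0 * fderiv ℝ φ x (s3 0) + w x 1 * fderiv ℝ φ x (s3 1)
          + w x 2 * fderiv ℝ φ x (s3 2)) := by simp only [e1]
    _ = (∫ x : E3, w x 0 * fderiv ℝ φ x (s3 0)) + (∫ x : E3, w x 1 * fderiv ℝ φ x (s3 1))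
          + ∫ x : E3, w x 2 * fderiv ℝ φ x (s3 2) :=
        int3 ((hwi 0).mul (hφ.pd _)).integrable ((hwi 1).mul (hφ.pd _)).integrable
          ((hwi 2).mul (hφ.pd _)).integrable
    _ = -((∫ x : E3, fderiv ℝ (fun y => w y 0) x (s3 0) * φ x)
          + (∫ x : E3, fderiv ℝ (fun y => w y 1) x (s3 1) * φ x)
          + ∫ x : E3, fderiv ℝ (fun y => w y 2) x (s3 2) * φ x) := by
        rw [nice_ibp (hwi 0) hφ, nice_ibp (hwi 1) hφ, nice_ibp (hwi 2) hφ]; ring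
    _ = -(∫ x : E3, (fderiv ℝ (fun y => w y 0) x (s3 0) * φ x
          + fderiv ℝ (fun y => w y 1) x (s3 1) * φ x
          + fderiv ℝ (fun y => w y 2) x (s3 2) * φ x)) := by
        rw [int3 (((hwi 0).pd _).mul hφ).integrable (((hwi 1).pd _).mul hφ).integrable
          (((hwi 2).pd _).mul hφ).integrable]
    _ = 0 := by simp only [e2, integral_zero, neg_zero]

theorem transport_zero {un um : E3 → E3} (hun : ContDiff ℝ (⊤ : ℕ∞) un) (huns : HasCompactSupport un)
    (hum : ContDiff ℝ (⊤ : ℕ∞) um) (hums : HasCompactSupport um) (humdiv : ∀ x, div3 um x = 0) :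
    ∫ x : E3, ⟪fderiv ℝ un x (um x), un x⟫ = 0 := by
  have hund := hun.differentiable (by simp)
  have e : ∀ x : E3, fderiv ℝ (fun y => (⟪un y, un y⟫ : ℝ)) x (um x)
      = 2 * ⟪fderiv ℝ un x (um x), un x⟫ := by
    intro x
    rw [fderiv_inner_apply ℝ (hund x) (hund x)]
    rw [real_inner_comm (un x)]
    ring
  have h := wdz hum hums (nice_inner hun hun huns) humdiv
  simp only [e] at h
  rw [integral_const_mul] at h
  linarith


theorem grad_pair {p : E3 → ℝ} {u : E3 → E3} (hp : Nice p) (hu : ContDiff ℝ (⊤ : ℕ∞) u)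
    (hus : HasCompactSupport u) (hdiv : ∀ x, div3 u x = 0) :
    ∫ x : E3, ⟪grad3 p x, u x⟫ = 0 := by
  have hud := hu.differentiable (by simp)
  have hui : ∀ i, Nice (fun x => u x i) := nice_comp hu hus
  have e1 : ∀ x : E3, (⟪grad3 p x, u x⟫ : ℝ) =
      fderiv ℝ p x (s3 0) * u x 0 + fderiv ℝ p x (s3 1) * u x 1
        + fderiv ℝ p x (s3 2) * u x 2 := by
    intro x
    simp [grad3, PiLp.inner_apply, Fin.sum_univ_three]
    ring
  have e2 : ∀ x : E3,
      p x * fderiv ℝ (fun y => u y 0) x (s3 0) + p x * fderiv ℝ (fun y => u y 1) x (s3 1)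
        + p x * fderiv ℝ (fun y => u y 2) x (s3 2) = 0 := by
    intro x
    have hd := hdiv x
    simp only [div3, pd, Fin.sum_univ_three] at hd
    simp only [proj_fderiv hud]
    show p x * fderiv ℝ u x (s3 0) 0 + p x * fderiv ℝ u x (s3 1) 1
        + p x * fderiv ℝ u x (s3 2) 2 = 0
    linear_combination p x * hd
  have ibp : ∀ i : Fin 3, ∫ x : E3, fderiv ℝ p x (s3 i) * u x i
      = - ∫ x : E3, p x * fderiv ℝ (fun y => u y i) x (s3 i) := by
    intro i
    have := nice_ibp hp (hui i) (s3 i)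
    linarith
  calc ∫ x : E3, ⟪grad3 p x, u x⟫
      = ∫ x : E3, (fderiv ℝ p x (s3 0) * u x 0 + fderiv ℝ p x (s3 1) * u x 1
          + fderiv ℝ p x (s3 2) * u x 2) := by simp only [e1]
    _ = (∫ x : E3, fderiv ℝ p x (s3 0) * u x 0) + (∫ x : E3, fderiv ℝ p x (s3 1) * u x 1)
          + ∫ x : E3, fderiv ℝ p x (s3 2) * u x 2 :=
        int3 ((hp.pd _).mul (hui 0)).integrable ((hp.pd _).mul (hui 1)).integrable
          ((hp.pd _).mul (hui 2)).integrable
    _ = -((∫ x : E3, p x * fderiv ℝ (fun y => u y 0) x (s3 0))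
          + (∫ x : E3, p x * fderiv ℝ (fun y => u y 1) x (s3 1))
          + ∫ x : E3, p x * fderiv ℝ (fun y => u y 2) x (s3 2)) := by
        rw [ibp 0, ibp 1, ibp 2]; ring
    _ = -(∫ x : E3, (p x * fderiv ℝ (fun y => u y 0) x (s3 0)
          + p x * fderiv ℝ (fun y => u y 1) x (s3 1)
          + p x * fderiv ℝ (fun y => u y 2) x (s3 2))) := by
        rw [int3 (hp.mul ((hui 0).pd _)).integrable (hp.mul ((hui 1).pd _)).integrable
          (hp.mul ((hui 2).pd _)).integrable]
    _ = 0 := by simp only [e2, integral_zero, neg_zero]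



theorem lap_pair {u : E3 → E3} (hu : ContDiff ℝ (⊤ : ℕ∞) u) (hus : HasCompactSupport u) :
    ∫ x : E3, ⟪lap3 u x, u x⟫ = - ∫ x : E3, gradNormSq u x := by
  have hud := hu.differentiable (by simp)
  have hui : ∀ i, Nice (fun x => u x i) := nice_comp hu hus
  have key : ∀ (j i : Fin 3) (x : E3),
      fderiv ℝ (fun y => fderiv ℝ u y (s3 j)) x (s3 j) i
        = fderiv ℝ (fun y => fderiv ℝ (fun z => u z i) y (s3 j)) x (s3 j) := by
    intro j i x
    rw [← proj_fderiv ((contDiff_fdv hu (s3 j)).differentiable (by simp))]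
    simp only [← proj_fderiv hud]
  have e1 : ∀ x : E3, (⟪lap3 u x, u x⟫ : ℝ) =
      ∑ i, ∑ j, u x i * fderiv ℝ (fun y => fderiv ℝ (fun z => u z i) y (s3 j)) x (s3 j) := by
    intro x
    simp only [lap3, Fin.sum_univ_three, PiLp.inner_apply, RCLike.inner_apply, conj_trivial,
      PiLp.add_apply, key]
    ring
  have e2 : ∀ x : E3, gradNormSq u x =
      ∑ i, ∑ j, fderiv ℝ (fun z => u z i) x (s3 j) * fderiv ℝ (fun z => u z i) x (s3 j) := by
    intro x
    simp only [gradNormSq, ← proj_fderiv hud, sq]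
  have N2 : ∀ (i j : Fin 3), Nice (fun x =>
      u x i * fderiv ℝ (fun y => fderiv ℝ (fun z => u z i) y (s3 j)) x (s3 j)) :=
    fun i j => (hui i).mul (((hui i).pd (s3 j)).pd (s3 j))
  have N3 : ∀ (i j : Fin 3), Nice (fun x =>
      fderiv ℝ (fun z => u z i) x (s3 j) * fderiv ℝ (fun z => u z i) x (s3 j)) :=
    fun i j => ((hui i).pd (s3 j)).mul ((hui i).pd (s3 j))
  have ibp : ∀ (i j : Fin 3),
      ∫ x : E3, u x i * fderiv ℝ (fun y => fderiv ℝ (fun z => u z i) y (s3 j)) x (s3 j)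
        = - ∫ x : E3, fderiv ℝ (fun z => u z i) x (s3 j) * fderiv ℝ (fun z => u z i) x (s3 j) :=
    fun i j => nice_ibp (hui i) ((hui i).pd (s3 j)) (s3 j)
  calc ∫ x : E3, ⟪lap3 u x, u x⟫
      = ∫ x : E3, ∑ i, ∑ j, u x i
          * fderiv ℝ (fun y => fderiv ℝ (fun z => u z i) y (s3 j)) x (s3 j) := by
        simp only [e1]
    _ = ∑ i, ∑ j, ∫ x : E3, u x i
          * fderiv ℝ (fun y => fderiv ℝ (fun z => u z i) y (s3 j)) x (s3 j) := by
        rw [integral_finset_sum _ fun i _ => integrable_finset_sum _ fun j _ => (N2 i j).integrable]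
        exact Finset.sum_congr rfl fun i _ => integral_finset_sum _ fun j _ => (N2 i j).integrable
    _ = ∑ i, ∑ j, - ∫ x : E3, fderiv ℝ (fun z => u z i) x (s3 j)
          * fderiv ℝ (fun z => u z i) x (s3 j) :=
        Finset.sum_congr rfl fun i _ => Finset.sum_congr rfl fun j _ => ibp i j
    _ = - ∑ i, ∑ j, ∫ x : E3, fderiv ℝ (fun z => u z i) x (s3 j)
          * fderiv ℝ (fun z => u z i) x (s3 j) := by
        simp [Finset.sum_neg_distrib]
    _ = - ∫ x : E3, ∑ i, ∑ j, fderiv ℝ (fun z => u z i) x (s3 j)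
          * fderiv ℝ (fun z => u z i) x (s3 j) := by
        rw [integral_finset_sum _ fun i _ => integrable_finset_sum _ fun j _ => (N3 i j).integrable]
        congr 1
        exact Finset.sum_congr rfl fun i _ => (integral_finset_sum _ fun j _ => (N3 i j).integrable).symm
    _ = - ∫ x : E3, gradNormSq u x := by simp only [e2]


theorem curl_pair {E B : E3 → E3} (hE : ContDiff ℝ (⊤ : ℕ∞) E) (hEs : HasCompactSupport E)
    (hB : ContDiff ℝ (⊤ : ℕ∞) B) (hBs : HasCompactSupport B) :
    ∫ x : E3, ⟪curl3 E x, B x⟫ = ∫ x : E3, ⟪E x, curl3 B x⟫ := by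
  have hEd := hE.differentiable (by simp)
  have hBd := hB.differentiable (by simp)
  have hEi : ∀ i, Nice (fun x => E x i) := nice_comp hE hEs
  have hBi : ∀ i, Nice (fun x => B x i) := nice_comp hB hBs
  have e1 : ∀ x : E3, (⟪curl3 E x, B x⟫ : ℝ) =
      (fderiv ℝ (fun y => E y 2) x (s3 1) * B x 0 + fderiv ℝ (fun y => E y 0) x (s3 2) * B x 1
        + fderiv ℝ (fun y => E y 1) x (s3 0) * B x 2)
      - (fderiv ℝ (fun y => E y 1) x (s3 2) * B x 0 + fderiv ℝ (fun y => E y 2) x (s3 0) * B x 1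
        + fderiv ℝ (fun y => E y 0) x (s3 1) * B x 2) := by
    intro x
    simp only [curl3, pd, PiLp.inner_apply, RCLike.inner_apply, conj_trivial,
      Fin.sum_univ_three, ← proj_fderiv hEd]
    simp
    ring
  have e2 : ∀ x : E3, (⟪E x, curl3 B x⟫ : ℝ) =
      (E x 0 * fderiv ℝ (fun y => B y 2) x (s3 1) + E x 1 * fderiv ℝ (fun y => B y 0) x (s3 2)
        + E x 2 * fderiv ℝ (fun y => B y 1) x (s3 0))
      - (E x 0 * fderiv ℝ (fun y => B y 1) x (s3 2) + E x 1 * fderiv ℝ (fun y => B y 2) x (s3 0)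
        + E x 2 * fderiv ℝ (fun y => B y 0) x (s3 1)) := by
    intro x
    simp only [curl3, pd, PiLp.inner_apply, RCLike.inner_apply, conj_trivial,
      Fin.sum_univ_three, ← proj_fderiv hBd]
    simp
    ring
  have ibp : ∀ (i l j : Fin 3),
      ∫ x : E3, fderiv ℝ (fun y => E y i) x (s3 j) * B x l
        = - ∫ x : E3, E x i * fderiv ℝ (fun y => B y l) x (s3 j) := by
    intro i l j
    have := nice_ibp (hEi i) (hBi l) (s3 j)
    linarith
  have NA : ∀ (i l j : Fin 3), Nice (fun x => fderiv ℝ (fun y => E y i) x (s3 j) * B x l) :=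
    fun i l j => ((hEi i).pd (s3 j)).mul (hBi l)
  have NB : ∀ (i l j : Fin 3), Nice (fun x => E x i * fderiv ℝ (fun y => B y l) x (s3 j)) :=
    fun i l j => (hEi i).mul ((hBi l).pd (s3 j))
  have h1 : ∫ x : E3, ⟪curl3 E x, B x⟫ =
      ((∫ x : E3, fderiv ℝ (fun y => E y 2) x (s3 1) * B x 0)
        + (∫ x : E3, fderiv ℝ (fun y => E y 0) x (s3 2) * B x 1)
        + ∫ x : E3, fderiv ℝ (fun y => E y 1) x (s3 0) * B x 2)
      - ((∫ x : E3, fderiv ℝ (fun y => E y 1) x (s3 2) * B x 0)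
        + (∫ x : E3, fderiv ℝ (fun y => E y 2) x (s3 0) * B x 1)
        + ∫ x : E3, fderiv ℝ (fun y => E y 0) x (s3 1) * B x 2) := by
    calc ∫ x : E3, ⟪curl3 E x, B x⟫
        = ∫ x : E3, ((fderiv ℝ (fun y => E y 2) x (s3 1) * B x 0
            + fderiv ℝ (fun y => E y 0) x (s3 2) * B x 1
            + fderiv ℝ (fun y => E y 1) x (s3 0) * B x 2)
          - (fderiv ℝ (fun y => E y 1) x (s3 2) * B x 0
            + fderiv ℝ (fun y => E y 2) x (s3 0) * B x 1
            + fderiv ℝ (fun y => E y 0) x (s3 1) * B x 2)) := by simp only [e1]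
      _ = _ := by
          have hX : Integrable (fun x : E3 => fderiv ℝ (fun y => E y 2) x (s3 1) * B x 0
              + fderiv ℝ (fun y => E y 0) x (s3 2) * B x 1
              + fderiv ℝ (fun y => E y 1) x (s3 0) * B x 2) := by
            exact ((NA 2 0 1).integrable.add (NA 0 1 2).integrable).add (NA 1 2 0).integrable
          have hY : Integrable (fun x : E3 => fderiv ℝ (fun y => E y 1) x (s3 2) * B x 0
              + fderiv ℝ (fun y => E y 2) x (s3 0) * B x 1
              + fderiv ℝ (fun y => E y 0) x (s3 1) * B x 2) := by
            exact ((NA 1 0 2).integrable.add (NA 2 1 0).integrable).add (NA 0 2 1).integrable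
          rw [integral_sub hX hY,
            int3 (NA 2 0 1).integrable (NA 0 1 2).integrable (NA 1 2 0).integrable,
            int3 (NA 1 0 2).integrable (NA 2 1 0).integrable (NA 0 2 1).integrable]
  have h2 : ∫ x : E3, ⟪E x, curl3 B x⟫ =
      ((∫ x : E3, E x 0 * fderiv ℝ (fun y => B y 2) x (s3 1))
        + (∫ x : E3, E x 1 * fderiv ℝ (fun y => B y 0) x (s3 2))
        + ∫ x : E3, E x 2 * fderiv ℝ (fun y => B y 1) x (s3 0))
      - ((∫ x : E3, E x 0 * fderiv ℝ (fun y => B y 1) x (s3 2))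
        + (∫ x : E3, E x 1 * fderiv ℝ (fun y => B y 2) x (s3 0))
        + ∫ x : E3, E x 2 * fderiv ℝ (fun y => B y 0) x (s3 1)) := by
    calc ∫ x : E3, ⟪E x, curl3 B x⟫
        = ∫ x : E3, ((E x 0 * fderiv ℝ (fun y => B y 2) x (s3 1)
            + E x 1 * fderiv ℝ (fun y => B y 0) x (s3 2)
            + E x 2 * fderiv ℝ (fun y => B y 1) x (s3 0))
          - (E x 0 * fderiv ℝ (fun y => B y 1) x (s3 2)
            + E x 1 * fderiv ℝ (fun y => B y 2) x (s3 0)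
            + E x 2 * fderiv ℝ (fun y => B y 0) x (s3 1))) := by simp only [e2]
      _ = _ := by
          have hX : Integrable (fun x : E3 => E x 0 * fderiv ℝ (fun y => B y 2) x (s3 1)
              + E x 1 * fderiv ℝ (fun y => B y 0) x (s3 2)
              + E x 2 * fderiv ℝ (fun y => B y 1) x (s3 0)) := by
            exact ((NB 0 2 1).integrable.add (NB 1 0 2).integrable).add (NB 2 1 0).integrable
          have hY : Integrable (fun x : E3 => E x 0 * fderiv ℝ (fun y => B y 1) x (s3 2)
              + E x 1 * fderiv ℝ (fun y => B y 2) x (s3 0)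
              + E x 2 * fderiv ℝ (fun y => B y 0) x (s3 1)) := by
            exact ((NB 0 1 2).integrable.add (NB 1 2 0).integrable).add (NB 2 0 1).integrable
          rw [integral_sub hX hY,
            int3 (NB 0 2 1).integrable (NB 1 0 2).integrable (NB 2 1 0).integrable,
            int3 (NB 0 1 2).integrable (NB 1 2 0).integrable (NB 2 0 1).integrable]
  rw [h1, h2]
  have i1 := ibp 2 0 1
  have i2 := ibp 0 1 2
  have i3 := ibp 1 2 0
  have i4 := ibp 1 0 2
  have i5 := ibp 2 1 0
  have i6 := ibp 0 2 1
  linarith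



theorem cross_triple (a b c : E3) : ⟪cross3 a b, c⟫ = ⟪cross3 b c, a⟫ := by
  simp [cross3, PiLp.inner_apply, crossProduct, Fin.sum_univ_three]
  ring

theorem cross_anti (a b : E3) : cross3 a b = - cross3 b a := by
  ext i
  fin_cases i <;> simp [cross3, crossProduct] <;> ring

theorem nice_normsq {F : E3 → E3} (hF : ContDiff ℝ (⊤ : ℕ∞) F) (hFs : HasCompactSupport F) :
    Nice (fun x => ‖F x‖ ^ 2) := by
  have h := nice_inner hF hF hFs
  have e : (fun x => (⟪F x, F x⟫ : ℝ)) = fun x => ‖F x‖ ^ 2 :=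
    funext fun x => real_inner_self_eq_norm_sq _
  rwa [e] at h

theorem hcs_sub {F G : E3 → E3} (hF : HasCompactSupport F) (hG : HasCompactSupport G) :
    HasCompactSupport (fun x => F x - G x) :=
  HasCompactSupport.intro (hF.union hG) fun x hx => by
    rw [image_eq_zero_of_notMem_tsupport (fun h => hx (Set.mem_union_left _ h)),
        image_eq_zero_of_notMem_tsupport (fun h => hx (Set.mem_union_right _ h)), sub_zero]

/-- Theorem 6, classical form: per-step energy inequality for
the Picard-linearized scheme. -/
theorem picard_energy_step
    (Re Rm S k : ℝ) (hRe : 0 < Re) (hRm : 0 < Rm) (hS : 0 < S) (hk : 0 < k)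
    (um Bm un Bn En jn fn : E3 → E3) (pn : E3 → ℝ)
    (hum : ContDiff ℝ (⊤ : ℕ∞) um) (hums : HasCompactSupport um)
    (hBm : ContDiff ℝ (⊤ : ℕ∞) Bm) (hBms : HasCompactSupport Bm)
    (hun : ContDiff ℝ (⊤ : ℕ∞) un) (huns : HasCompactSupport un)
    (hBn : ContDiff ℝ (⊤ : ℕ∞) Bn) (hBns : HasCompactSupport Bn)
    (hEn : ContDiff ℝ (⊤ : ℕ∞) En) (hEns : HasCompactSupport En)
    (hjn : ContDiff ℝ (⊤ : ℕ∞) jn) (hjns : HasCompactSupport jn)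
    (hfn : ContDiff ℝ (⊤ : ℕ∞) fn) (hfns : HasCompactSupport fn)
    (hpn : ContDiff ℝ (⊤ : ℕ∞) pn) (hpns : HasCompactSupport pn)
    (humdiv : ∀ x : E3, div3 um x = 0)
    (momentum : ∀ x : E3,
      k⁻¹ • (un x - um x) + fderiv ℝ un x (um x)
          - (1 / Re) • lap3 un x - S • cross3 (jn x) (Bm x)
          + grad3 pn x = fn x)
    (ohm : ∀ x : E3, jn x = En x + cross3 (un x) (Bm x))
    (ampere : ∀ x : E3, jn x = (1 / Rm) • curl3 Bn x)
    (faraday : ∀ x : E3, k⁻¹ • (Bn x - Bm x) + curl3 En x = 0)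
    (incomp : ∀ x : E3, div3 un x = 0) :
    (∫ x : E3, ‖un x‖ ^ 2) + (S / Rm) * (∫ x : E3, ‖Bn x‖ ^ 2)
        + (2 * k / Re) * (∫ x : E3, gradNormSq un x)
        + 2 * k * S * (∫ x : E3, ‖jn x‖ ^ 2)
      ≤ (∫ x : E3, ‖um x‖ ^ 2) + (S / Rm) * (∫ x : E3, ‖Bm x‖ ^ 2)
        + 2 * k * ∫ x : E3, ⟪fn x, un x⟫ := by
  have hk0 : k ≠ 0 := ne_of_gt hk
  have hRm0 : Rm ≠ 0 := ne_of_gt hRm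
  -- pointwise master identity
  have P : ∀ x : E3,
      ‖un x‖ ^ 2 + ((S/Rm) * ‖Bn x‖ ^ 2 + (2*k*S) * ‖jn x‖ ^ 2)
      = (2*k) * ⟪fn x, un x⟫ + (1 * ‖um x‖ ^ 2 + ((S/Rm) * ‖Bm x‖ ^ 2
        + ((-1 : ℝ) * ‖un x - um x‖ ^ 2 + ((-(S/Rm)) * ‖Bn x - Bm x‖ ^ 2
        + ((-(2*k)) * ⟪fderiv ℝ un x (um x), un x⟫
        + ((-(2*k)) * ⟪grad3 pn x, un x⟫ + ((2*k/Re) * ⟪lap3 un x, un x⟫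
        + ((2*k*S) * ⟪jn x, En x⟫ + (-(2*k*S/Rm)) * ⟪curl3 En x, Bn x⟫)))))))) := by
    intro x
    have hm := congrArg (fun v : E3 => (⟪v, un x⟫ : ℝ)) (momentum x)
    simp only [inner_add_left, inner_sub_left, real_inner_smul_left] at hm
    have hfa := congrArg (fun v : E3 => (⟪v, Bn x⟫ : ℝ)) (faraday x)
    simp only [inner_add_left, inner_sub_left, real_inner_smul_left, inner_zero_left] at hfa
    have hc : (⟪cross3 (jn x) (Bm x), un x⟫ : ℝ) = ⟪jn x, En x⟫ - ‖jn x‖ ^ 2 := by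
      calc (⟪cross3 (jn x) (Bm x), un x⟫ : ℝ)
          = ⟪cross3 (Bm x) (un x), jn x⟫ := cross_triple _ _ _
        _ = -⟪cross3 (un x) (Bm x), jn x⟫ := by rw [cross_anti (Bm x) (un x), inner_neg_left]
        _ = -⟪jn x - En x, jn x⟫ := by
            rw [show cross3 (un x) (Bm x) = jn x - En x from by rw [ohm x]; abel]
        _ = ⟪jn x, En x⟫ - ‖jn x‖ ^ 2 := by
            rw [inner_sub_left, real_inner_self_eq_norm_sq, real_inner_comm (En x) (jn x)]
            ring
    have ha : 2 * ((⟪un x, un x⟫ : ℝ) - ⟪um x, un x⟫)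
        = ‖un x‖ ^ 2 - ‖um x‖ ^ 2 + ‖un x - um x‖ ^ 2 := by
      rw [norm_sub_sq_real, real_inner_self_eq_norm_sq, real_inner_comm (um x) (un x)]
      ring
    have hb : 2 * ((⟪Bn x, Bn x⟫ : ℝ) - ⟪Bm x, Bn x⟫)
        = ‖Bn x‖ ^ 2 - ‖Bm x‖ ^ 2 + ‖Bn x - Bm x‖ ^ 2 := by
      rw [norm_sub_sq_real, real_inner_self_eq_norm_sq, real_inner_comm (Bm x) (Bn x)]
      ring
    have hm' : (⟪un x, un x⟫ : ℝ) - ⟪um x, un x⟫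
        = k * (⟪fn x, un x⟫ - ⟪fderiv ℝ un x (um x), un x⟫ + (1/Re) * ⟪lap3 un x, un x⟫
          + S * (⟪jn x, En x⟫ - ‖jn x‖ ^ 2) - ⟪grad3 pn x, un x⟫) := by
      have h1 : k⁻¹ * ((⟪un x, un x⟫ : ℝ) - ⟪um x, un x⟫)
          = ⟪fn x, un x⟫ - ⟪fderiv ℝ un x (um x), un x⟫ + (1/Re) * ⟪lap3 un x, un x⟫
            + S * (⟪jn x, En x⟫ - ‖jn x‖ ^ 2) - ⟪grad3 pn x, un x⟫ := by
        linear_combination hm + S * hc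
      calc (⟪un x, un x⟫ : ℝ) - ⟪um x, un x⟫
          = k * (k⁻¹ * ((⟪un x, un x⟫ : ℝ) - ⟪um x, un x⟫)) := by
            rw [← mul_assoc, mul_inv_cancel₀ hk0, one_mul]
        _ = _ := by rw [h1]
    have hfa' : (⟪Bn x, Bn x⟫ : ℝ) - ⟪Bm x, Bn x⟫ = -(k * ⟪curl3 En x, Bn x⟫) := by
      have h1 : k⁻¹ * ((⟪Bn x, Bn x⟫ : ℝ) - ⟪Bm x, Bn x⟫) = -⟪curl3 En x, Bn x⟫ := by
        linear_combination hfa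
      calc (⟪Bn x, Bn x⟫ : ℝ) - ⟪Bm x, Bn x⟫
          = k * (k⁻¹ * ((⟪Bn x, Bn x⟫ : ℝ) - ⟪Bm x, Bn x⟫)) := by
            rw [← mul_assoc, mul_inv_cancel₀ hk0, one_mul]
        _ = -(k * ⟪curl3 En x, Bn x⟫) := by rw [h1]; ring
    linear_combination 2 * hm' + (2*S/Rm) * hfa' - ha - (S/Rm) * hb
  -- smoothness of composite fields
  have hFD : ContDiff ℝ (⊤ : ℕ∞) (fun x => fderiv ℝ un x (um x)) :=
    (hun.fderiv_right (by simp)).clm_apply hum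
  have hGrad : ContDiff ℝ (⊤ : ℕ∞) (fun x => grad3 pn x) := by
    rw [contDiff_euclidean]
    intro i
    fin_cases i <;> simp only [grad3, WithLp.equiv_symm_apply, PiLp.toLp_apply, Matrix.cons_val_zero,
        Matrix.cons_val_one, Matrix.head_cons, Matrix.cons_val_two, Matrix.tail_cons,
        Fin.isValue] <;>
      exact (hpn.fderiv_right (by simp)).clm_apply contDiff_const
  have hCurlE : ContDiff ℝ (⊤ : ℕ∞) (fun x => curl3 En x) := by
    rw [contDiff_euclidean]
    intro i
    fin_cases i <;> simp only [curl3, pd, WithLp.equiv_symm_apply, PiLp.toLp_apply, Matrix.cons_val_zero,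
        Matrix.cons_val_one, Matrix.head_cons, Matrix.cons_val_two, Matrix.tail_cons,
        Fin.isValue] <;>
      exact ((EuclideanSpace.proj (𝕜 := ℝ) _).contDiff.comp (contDiff_fdv hEn _)).sub
        ((EuclideanSpace.proj (𝕜 := ℝ) _).contDiff.comp (contDiff_fdv hEn _))
  have hLap : ContDiff ℝ (⊤ : ℕ∞) (fun x => lap3 un x) := by
    simp only [lap3]
    exact ContDiff.sum fun j _ => contDiff_fdv (contDiff_fdv hun _) _
  -- integrability
  have N1 := nice_normsq hun huns
  have N2 := nice_normsq hBn hBns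
  have N3 := nice_normsq hjn hjns
  have N4 := nice_inner hfn hun huns
  have N5 := nice_normsq hum hums
  have N6 := nice_normsq hBm hBms
  have N7 := nice_normsq (hun.sub hum) (hcs_sub huns hums)
  have N8 := nice_normsq (hBn.sub hBm) (hcs_sub hBns hBms)
  have N9 := nice_inner hFD hun huns
  have N10 := nice_inner hGrad hun huns
  have N11 := nice_inner hLap hun huns
  have N12 := nice_inner hjn hEn hEns
  have N13 := nice_inner hCurlE hBn hBns
  -- integrate the master identity
  have E1 : (∫ x : E3, (‖un x‖ ^ 2 + ((S/Rm) * ‖Bn x‖ ^ 2 + (2*k*S) * ‖jn x‖ ^ 2)))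
      = ∫ x : E3, ((2*k) * ⟪fn x, un x⟫ + (1 * ‖um x‖ ^ 2 + ((S/Rm) * ‖Bm x‖ ^ 2
        + ((-1 : ℝ) * ‖un x - um x‖ ^ 2 + ((-(S/Rm)) * ‖Bn x - Bm x‖ ^ 2
        + ((-(2*k)) * ⟪fderiv ℝ un x (um x), un x⟫
        + ((-(2*k)) * ⟪grad3 pn x, un x⟫ + ((2*k/Re) * ⟪lap3 un x, un x⟫
        + ((2*k*S) * ⟪jn x, En x⟫ + (-(2*k*S/Rm)) * ⟪curl3 En x, Bn x⟫)))))))))  := by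
    exact integral_congr_ae (Filter.Eventually.of_forall P)
  -- split LHS
  have T2 : Integrable (fun x : E3 => (S/Rm) * ‖Bn x‖ ^ 2 + (2*k*S) * ‖jn x‖ ^ 2) := by
    exact (N2.integrable.const_mul _).add (N3.integrable.const_mul _)
  rw [integral_add N1.integrable T2,
    integral_add (N2.integrable.const_mul _) (N3.integrable.const_mul _)] at E1
  -- split RHS (right-associated 10-term sum)
  have R10 : Integrable (fun x : E3 => (-(2*k*S/Rm)) * ⟪curl3 En x, Bn x⟫) :=
    N13.integrable.const_mul _
  have R9 : Integrable (fun x : E3 => (2*k*S) * ⟪jn x, En x⟫ + (-(2*k*S/Rm)) * ⟪curl3 En x, Bn x⟫) := by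
    exact (N12.integrable.const_mul _).add R10
  have R8 : Integrable (fun x : E3 => (2*k/Re) * ⟪lap3 un x, un x⟫
      + ((2*k*S) * ⟪jn x, En x⟫ + (-(2*k*S/Rm)) * ⟪curl3 En x, Bn x⟫)) := by
    exact (N11.integrable.const_mul _).add R9
  have R7 : Integrable (fun x : E3 => (-(2*k)) * ⟪grad3 pn x, un x⟫ + ((2*k/Re) * ⟪lap3 un x, un x⟫
      + ((2*k*S) * ⟪jn x, En x⟫ + (-(2*k*S/Rm)) * ⟪curl3 En x, Bn x⟫))) := by
    exact (N10.integrable.const_mul _).add R8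
  have R6 : Integrable (fun x : E3 => (-(2*k)) * ⟪fderiv ℝ un x (um x), un x⟫
      + ((-(2*k)) * ⟪grad3 pn x, un x⟫ + ((2*k/Re) * ⟪lap3 un x, un x⟫
      + ((2*k*S) * ⟪jn x, En x⟫ + (-(2*k*S/Rm)) * ⟪curl3 En x, Bn x⟫)))) := by
    exact (N9.integrable.const_mul _).add R7
  have R5 : Integrable (fun x : E3 => (-(S/Rm)) * ‖Bn x - Bm x‖ ^ 2
      + ((-(2*k)) * ⟪fderiv ℝ un x (um x), un x⟫
      + ((-(2*k)) * ⟪grad3 pn x, un x⟫ + ((2*k/Re) * ⟪lap3 un x, un x⟫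
      + ((2*k*S) * ⟪jn x, En x⟫ + (-(2*k*S/Rm)) * ⟪curl3 En x, Bn x⟫))))) := by
    exact (N8.integrable.const_mul _).add R6
  have R4 : Integrable (fun x : E3 => (-1 : ℝ) * ‖un x - um x‖ ^ 2 + ((-(S/Rm)) * ‖Bn x - Bm x‖ ^ 2
      + ((-(2*k)) * ⟪fderiv ℝ un x (um x), un x⟫
      + ((-(2*k)) * ⟪grad3 pn x, un x⟫ + ((2*k/Re) * ⟪lap3 un x, un x⟫
      + ((2*k*S) * ⟪jn x, En x⟫ + (-(2*k*S/Rm)) * ⟪curl3 En x, Bn x⟫)))))) := by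
    exact (N7.integrable.const_mul _).add R5
  have R3 : Integrable (fun x : E3 => (S/Rm) * ‖Bm x‖ ^ 2
      + ((-1 : ℝ) * ‖un x - um x‖ ^ 2 + ((-(S/Rm)) * ‖Bn x - Bm x‖ ^ 2
      + ((-(2*k)) * ⟪fderiv ℝ un x (um x), un x⟫
      + ((-(2*k)) * ⟪grad3 pn x, un x⟫ + ((2*k/Re) * ⟪lap3 un x, un x⟫
      + ((2*k*S) * ⟪jn x, En x⟫ + (-(2*k*S/Rm)) * ⟪curl3 En x, Bn x⟫))))))) := by
    exact (N6.integrable.const_mul _).add R4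
  have R2 : Integrable (fun x : E3 => 1 * ‖um x‖ ^ 2 + ((S/Rm) * ‖Bm x‖ ^ 2
      + ((-1 : ℝ) * ‖un x - um x‖ ^ 2 + ((-(S/Rm)) * ‖Bn x - Bm x‖ ^ 2
      + ((-(2*k)) * ⟪fderiv ℝ un x (um x), un x⟫
      + ((-(2*k)) * ⟪grad3 pn x, un x⟫ + ((2*k/Re) * ⟪lap3 un x, un x⟫
      + ((2*k*S) * ⟪jn x, En x⟫ + (-(2*k*S/Rm)) * ⟪curl3 En x, Bn x⟫)))))))) := by
    exact (N5.integrable.const_mul _).add R3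
  rw [integral_add (N4.integrable.const_mul _) R2,
    integral_add (N5.integrable.const_mul _) R3,
    integral_add (N6.integrable.const_mul _) R4,
    integral_add (N7.integrable.const_mul _) R5,
    integral_add (N8.integrable.const_mul _) R6,
    integral_add (N9.integrable.const_mul _) R7,
    integral_add (N10.integrable.const_mul _) R8,
    integral_add (N11.integrable.const_mul _) R9,
    integral_add (N12.integrable.const_mul _) R10] at E1
  simp only [integral_const_mul] at E1
  -- the four integral identities
  have L1 : ∫ x : E3, ⟪fderiv ℝ un x (um x), un x⟫ = 0 :=
    transport_zero hun huns hum hums humdiv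
  have L2 : ∫ x : E3, ⟪grad3 pn x, un x⟫ = 0 :=
    grad_pair ⟨hpn, hpns⟩ hun huns incomp
  have L3 : ∫ x : E3, ⟪lap3 un x, un x⟫ = - ∫ x : E3, gradNormSq un x :=
    lap_pair hun huns
  have L4 : ∫ x : E3, ⟪curl3 En x, Bn x⟫ = Rm * ∫ x : E3, ⟪jn x, En x⟫ := by
    rw [curl_pair hEn hEns hBn hBns]
    have hcB : ∀ x : E3, (⟪En x, curl3 Bn x⟫ : ℝ) = Rm * ⟪jn x, En x⟫ := by
      intro x
      have h : curl3 Bn x = Rm • jn x := by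
        rw [ampere x, smul_smul, mul_one_div, div_self hRm0, one_smul]
      rw [h, real_inner_smul_right, real_inner_comm]
    simp only [hcB]
    rw [integral_const_mul]
  rw [L1, L2, L3, L4] at E1
  -- nonnegativity of defect terms
  have hID : (0:ℝ) ≤ ∫ x : E3, ‖un x - um x‖ ^ 2 :=
    integral_nonneg fun x => by positivity
  have hIBD : (0:ℝ) ≤ (S/Rm) * ∫ x : E3, ‖Bn x - Bm x‖ ^ 2 :=
    mul_nonneg (div_pos hS hRm).le (integral_nonneg fun x => by positivity)
  have hcancel : (-(2*k*S/Rm)) * (Rm * ∫ x : E3, ⟪jn x, En x⟫)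
      = -(2*k*S) * ∫ x : E3, ⟪jn x, En x⟫ := by
    field_simp
  linarith [E1, hID, hIBD, hcancel]
end
end
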